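/- arXiv:math/0501136 — 9 statements merged into one kernel-verified Lean document; each statement's English description precedes it below -/
import Mathlib

section
/- Let K be ℝ or ℂ, n ≥ 1, and let G be an abelian subgroup of GL(n,K). Then there exists a G-invariant, dense, open set U in K^n such that: (i) every orbit of G contained in U is minimal in U; and (ii) K^n − U is a union of at most n G-invariant K-linear subspaces of K^n, each of dimension n−1 or n−2 over K. -/
/-!
Let `A` be the (commutative, finite-dimensional) `K`-algebra generated by `G`. For each of its
finitely many maximal ideals `𝔪` choose a maximal `A`-submodule `Y_𝔪 ⊇ 𝔪 Kⁿ`, and let `U` be the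
complement of the union of the `Y_𝔪`. The quotient `Kⁿ / Y_𝔪` is a simple `A`-module, hence a
copy of the field `A / 𝔪`, of dimension at most `2` over `K`; and the Chinese remainder theorem
makes `Kⁿ → ∏ Kⁿ / 𝔪 Kⁿ` surjective, so there are at most `n` maximal ideals.

A vector of `U` is not in any `𝔪 Kⁿ`, so every `a ∈ A` that maps some vector into `U` is a unit.
Now if `gₖ v → x ∈ U`, then `x = a v` with `a` a unit, and on the cyclic module `A v` the
operators `gₖ` converge to `a`; inverting, `gₖ⁻¹ x → a⁻¹ x = v`, which gives minimality.
-/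

open Module Function Filter Topology MulAction

/-- The orbit of a vector `v` under a subgroup `G` of `GL(n, K)` acting linearly on `Kⁿ`. -/
def glOrbit {K : Type*} [Field K] {n : ℕ} (G : Subgroup (Matrix.GeneralLinearGroup (Fin n) K))
    (v : Fin n → K) : Set (Fin n → K) :=
  {w | ∃ A ∈ G, (A : Matrix (Fin n) (Fin n) K).mulVec v = w}

namespace Submodule

variable {R M : Type*} [CommRing R] [AddCommGroup M] [Module R M]

theorem smul_top_ne_top_of_annihilator_le [Module.Finite R M] {p : Ideal R} [p.IsPrime]
    (h : Module.annihilator R M ≤ p) : p • (⊤ : Submodule R M) ≠ ⊤ := by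
  intro htop
  have hp : (⟨p, inferInstance⟩ : PrimeSpectrum R) ∈ support R (M ⧸ p • (⊤ : Submodule R M)) := by
    rw [support_quotient]
    exact ⟨mem_support_iff_of_finite.mpr h, (PrimeSpectrum.mem_zeroLocus _ _).mpr subset_rfl⟩
  rw [htop, support_eq_empty] at hp
  exact hp

theorem pi_mkQ_smul_top_surjective {ι : Type*} [Finite ι] {I : ι → Ideal R}
    (hI : Pairwise (IsCoprime on I)) :
    Surjective (LinearMap.pi fun i ↦ (I i • (⊤ : Submodule R M)).mkQ) := by
  convert (LinearEquiv.piCongrRight fun i ↦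
    TensorProduct.quotTensorEquivQuotSMul M (I i)).surjective.comp
      (Ideal.pi_tensorProductMk_quotient_surjective M I hI)
  ext
  simp

theorem exists_isCoatom_smul_top_le [Module.Finite R M] [FaithfulSMul R M] :
    ∃ Y : MaximalSpectrum R → Submodule R M, ∀ m, m.asIdeal • ⊤ ≤ Y m ∧ IsCoatom (Y m) := by
  have (m : MaximalSpectrum R) : ∃ Y : Submodule R M, m.asIdeal • ⊤ ≤ Y ∧ IsCoatom Y :=
    ((IsCoatomic.eq_top_or_exists_le_coatom _).resolve_left
      (smul_top_ne_top_of_annihilator_le (annihilator_eq_bot.mpr ‹_› ▸ bot_le))).imp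
      fun _ h ↦ h.symm
  choose Y hY using this
  exact ⟨Y, hY⟩

theorem isUnit_of_forall_smul_notMem {Y : MaximalSpectrum R → Submodule R M}
    (hY : ∀ m, m.asIdeal • ⊤ ≤ Y m) {a : R} {w : M} (h : ∀ m, a • w ∉ Y m) : IsUnit a := by
  by_contra ha
  obtain ⟨m, hm, ham⟩ := exists_max_ideal_of_mem_nonunits ha
  exact h ⟨m, hm⟩ (hY _ (smul_mem_smul ham mem_top))

end Submodule

section FiniteDimensional

variable {K : Type*} [RCLike K]

theorem RCLike.finrank_le_two_of_field (L : Type*) [Field L] [Algebra K L]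
    [FiniteDimensional K L] : finrank K L ≤ 2 := by
  let : Algebra ℝ L := ((algebraMap K L).comp (algebraMap ℝ K)).toAlgebra
  have : IsScalarTower ℝ K L := .of_algebraMap_eq fun _ ↦ rfl
  have : FiniteDimensional ℝ L := Module.Finite.trans K L
  have : Algebra.IsAlgebraic ℝ L := .of_finite ℝ L
  let ι : L →ₐ[ℝ] ℂ := IsAlgClosed.lift
  calc finrank K L ≤ finrank ℝ K * finrank K L := Nat.le_mul_of_pos_left _ finrank_pos
    _ = finrank ℝ L := finrank_mul_finrank ℝ K L
    _ ≤ finrank ℝ ℂ := LinearMap.finrank_le_finrank_of_injective (f := ι.toLinearMap) ι.injective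
    _ = 2 := Complex.finrank_real_complex

theorem IsSimpleModule.finrank_le_two (A M : Type*) [CommRing A] [Algebra K A] [AddCommGroup M]
    [Module A M] [Module K M] [IsScalarTower K A M] [FiniteDimensional K M]
    [IsSimpleModule A M] : finrank K M ≤ 2 := by
  obtain ⟨I, hI, ⟨e⟩⟩ := isSimpleModule_iff_quot_maximal.mp ‹IsSimpleModule A M›
  let := Ideal.Quotient.field I
  have : FiniteDimensional K (A ⧸ I) := .equiv (e.restrictScalars K)
  rw [(e.restrictScalars K).finrank_eq]
  exact RCLike.finrank_le_two_of_field (A ⧸ I)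

variable {V A : Type*} [AddCommGroup V] [Module K V] [FiniteDimensional K V]
  [CommRing A] [Algebra K A] [Module A V] [IsScalarTower K A V]

theorem finrank_restrictScalars_of_isCoatom {Y : Submodule A V} (hY : IsCoatom Y) :
    finrank K (Y.restrictScalars K) = finrank K V - 1 ∨
      finrank K (Y.restrictScalars K) = finrank K V - 2 := by
  have : IsSimpleModule A (V ⧸ Y) := isSimpleModule_iff_isCoatom.mpr hY
  have : Nontrivial (V ⧸ Y) := IsSimpleModule.nontrivial A _
  have hpos : 0 < finrank K (V ⧸ Y) := finrank_pos
  have hle : finrank K (V ⧸ Y) ≤ 2 := IsSimpleModule.finrank_le_two A (V ⧸ Y)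
  have hsum := Submodule.finrank_quotient_add_finrank (Y.restrictScalars K)
  rw [(Submodule.Quotient.restrictScalarsEquiv K Y).finrank_eq] at hsum
  omega

variable [FaithfulSMul A V]

include K V in
theorem finite_maximalSpectrum_of_faithfulSMul : Finite (MaximalSpectrum A) := by
  have : FiniteDimensional K A := .of_injective (Algebra.lsmul K K V).toLinearMap
    fun _ _ h ↦ FaithfulSMul.eq_of_smul_eq_smul (LinearMap.congr_fun h)
  have : IsArtinianRing A := .of_finite K A
  infer_instance

theorem card_maximalSpectrum_le_finrank : Nat.card (MaximalSpectrum A) ≤ finrank K V := by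
  have := finite_maximalSpectrum_of_faithfulSMul (K := K) (V := V) (A := A)
  have : Fintype (MaximalSpectrum A) := .ofFinite _
  have : Module.Finite A V := .of_restrictScalars_finite K A V
  let N (m : MaximalSpectrum A) : Submodule A V := m.asIdeal • ⊤
  have (m : MaximalSpectrum A) : Nontrivial (V ⧸ N m) := Submodule.Quotient.nontrivial_iff.mpr
    (Submodule.smul_top_ne_top_of_annihilator_le (annihilator_eq_bot.mpr ‹_› ▸ bot_le))
  have hsurj := Submodule.pi_mkQ_smul_top_surjective (M := V)
    (I := fun m : MaximalSpectrum A ↦ m.asIdeal)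
    fun _ _ h ↦ Ideal.isCoprime_of_isMaximal (MaximalSpectrum.ext_iff.ne.mp h)
  calc Nat.card (MaximalSpectrum A) = ∑ _m : MaximalSpectrum A, 1 := by
        rw [Finset.sum_const, smul_eq_mul, mul_one, Finset.card_univ, Nat.card_eq_fintype_card]
    _ ≤ ∑ m, finrank K (V ⧸ N m) := Finset.sum_le_sum fun m _ ↦ finrank_pos
    _ = finrank K (∀ m, V ⧸ N m) := (finrank_pi_fintype K).symm
    _ ≤ finrank K V := LinearMap.finrank_le_finrank_of_surjective
      (f := (LinearMap.pi fun m ↦ (N m).mkQ).restrictScalars K) hsurj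

theorem exists_isCoatom_forall_isUnit :
    ∃ (r : ℕ) (Y : Fin r → Submodule A V), r ≤ finrank K V ∧ (∀ k, IsCoatom (Y k)) ∧
      ∀ (a : A) (w : V), (∀ k, a • w ∉ Y k) → IsUnit a := by
  have := finite_maximalSpectrum_of_faithfulSMul (K := K) (V := V) (A := A)
  have : Module.Finite A V := .of_restrictScalars_finite K A V
  obtain ⟨Y, hY⟩ := Submodule.exists_isCoatom_smul_top_le (R := A) (M := V)
  let e := (Finite.equivFin (MaximalSpectrum A)).symm
  refine ⟨_, Y ∘ e, card_maximalSpectrum_le_finrank, fun k ↦ (hY (e k)).2, fun a w h ↦ ?_⟩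
  exact Submodule.isUnit_of_forall_smul_notMem (fun m ↦ (hY m).1) fun m ↦ by
    simpa [e] using h (e.symm m)

end FiniteDimensional

theorem ContinuousLinearMap.tendsto_iff_forall_tendsto_apply {𝕜 E F ι : Type*}
    [NontriviallyNormedField 𝕜] [CompleteSpace 𝕜] [NormedAddCommGroup E] [NormedSpace 𝕜 E]
    [FiniteDimensional 𝕜 E] [NormedAddCommGroup F] [NormedSpace 𝕜 F]
    {l : Filter ι} {f : ι → E →L[𝕜] F} {g : E →L[𝕜] F} :
    Tendsto f l (𝓝 g) ↔ ∀ y, Tendsto (f · y) l (𝓝 (g y)) := by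
  refine ⟨fun h y ↦ ((apply 𝕜 F y).continuous.tendsto g).comp h, fun h ↦ ?_⟩
  let e : (E →L[𝕜] F) ≃L[𝕜] Fin (finrank 𝕜 E) → F :=
    ((ContinuousLinearEquiv.ofFinrankEq (finrank_fin_fun 𝕜).symm).arrowCongr
      (1 : F ≃L[𝕜] F)).trans (ContinuousLinearEquiv.piRing _)
  rw [e.toHomeomorph.isInducing.tendsto_nhds_iff, tendsto_pi_nhds]
  exact fun i ↦ h _

theorem closure_orbit_subset_of_mem {G α : Type*} [Group G] [TopologicalSpace α] [MulAction G α]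
    [ContinuousConstSMul G α] {v x : α} (hx : x ∈ closure (orbit G v)) :
    closure (orbit G x) ⊆ closure (orbit G v) :=
  closure_minimal (by rintro _ ⟨g, rfl⟩; exact smul_closure_orbit_subset g v ⟨x, hx, rfl⟩)
    isClosed_closure

theorem dense_compl_iUnion_submodule {K V ι : Type*} [RCLike K] [NormedAddCommGroup V]
    [NormedSpace K V] [FiniteDimensional K V] [Finite ι] {Y : ι → Submodule K V}
    (hY : ∀ i, Y i ≠ ⊤) : Dense (⋃ i, (Y i : Set V))ᶜ := by
  have := FiniteDimensional.complete K V
  rw [Set.compl_iUnion]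
  refine dense_iInter_of_isOpen (fun i ↦ (Y i).closed_of_finiteDimensional.isOpen_compl) fun i ↦ ?_
  rw [← interior_eq_empty_iff_dense_compl, ← Set.not_nonempty_iff_eq_empty]
  exact fun h ↦ hY i ((Y i).eq_top_of_nonempty_interior' h)

section Orbits

variable {K V A : Type*} [RCLike K] [NormedAddCommGroup V] [NormedSpace K V]
  [FiniteDimensional K V] [CommRing A] [Algebra K A] [Module A V] [IsScalarTower K A V]

include K in
theorem tendsto_inv_smul_of_tendsto_smul {ι : Type*} {l : Filter ι} {a : ι → Aˣ} {u : Aˣ} {v : V}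
    (h : Tendsto (fun i ↦ a i • v) l (𝓝 (u • v))) :
    Tendsto (fun i ↦ (a i)⁻¹ • u • v) l (𝓝 v) := by
  set P := Submodule.span A {v}
  have : FiniteDimensional K P :=
    Module.Finite.of_injective (P.subtype.restrictScalars K) Subtype.val_injective
  have : CompleteSpace P := FiniteDimensional.complete K P
  let ρ : A →ₐ[K] (P →L[K] P) :=
    (Module.End.toContinuousLinearMap P).toAlgHom.comp (Algebra.lsmul K K P)
  have hρ_apply (b : A) (y : P) : (ρ b y : V) = b • (y : V) := rfl
  have hρ : Tendsto (fun i ↦ ρ (a i)) l (𝓝 (ρ u)) := by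
    refine ContinuousLinearMap.tendsto_iff_forall_tendsto_apply.mpr fun ⟨y, hy⟩ ↦ ?_
    obtain ⟨c, rfl⟩ := Submodule.mem_span_singleton.mp hy
    refine tendsto_subtype_rng.mpr ?_
    simp only [hρ_apply, smul_comm _ c]
    exact ((Algebra.lsmul K K V c).continuous_of_finiteDimensional.tendsto _).comp h
  have hρinv : Tendsto (fun i ↦ ρ ↑(a i)⁻¹) l (𝓝 (ρ ↑u⁻¹)) := by
    have hinv (b : Aˣ) : Ring.inverse (ρ b) = ρ ↑b⁻¹ :=
      Ring.inverse_unit (Units.map (ρ : A →* P →L[K] P) b)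
    have hcont : ContinuousAt Ring.inverse (ρ u) :=
      NormedRing.inverse_continuousAt (R := P →L[K] P) (Units.map (ρ : A →* P →L[K] P) u)
    simpa only [hinv, Function.comp_def] using hcont.tendsto.comp hρ
  have := tendsto_subtype_rng.mp <| ((ContinuousLinearMap.apply K P
    ⟨u • v, P.smul_mem _ (Submodule.mem_span_singleton_self v)⟩).continuous.tendsto _).comp hρinv
  simp only [Function.comp_def, ContinuousLinearMap.apply_apply, hρ_apply] at this
  rwa [show ((u⁻¹ : Aˣ) : A) • u • v = v from inv_smul_smul u v] at this

include K in
theorem mem_closure_orbit_of_isUnit {H : Subgroup Aˣ} {v x : V}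
    (hx : x ∈ closure (orbit H v)) (hunit : ∀ a : A, a • v = x → IsUnit a) :
    v ∈ closure (orbit H x) := by
  have hspan : closure (orbit H v) ⊆ Submodule.span A {v} := by
    refine closure_minimal ?_
      (Submodule.closed_of_finiteDimensional ((Submodule.span A {v}).restrictScalars K))
    rintro _ ⟨h, rfl⟩
    exact Submodule.smul_mem _ _ (Submodule.mem_span_singleton_self v)
  obtain ⟨a₀, rfl⟩ := Submodule.mem_span_singleton.mp (hspan hx)
  obtain ⟨u, rfl⟩ := hunit a₀ rfl
  obtain ⟨w, hw, hlim⟩ := mem_closure_iff_seq_limit.mp hx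
  choose h hh using hw
  refine mem_closure_of_tendsto (tendsto_inv_smul_of_tendsto_smul (K := K)
    (a := fun k ↦ (h k : Aˣ)) (hlim.congr fun k ↦ (hh k).symm)) (.of_forall fun k ↦ ?_)
  exact ⟨(h k)⁻¹, rfl⟩

include K in
theorem closure_orbit_eq_of_isUnit {H : Subgroup Aˣ} {v x : V}
    (hx : x ∈ closure (orbit H v)) (hunit : ∀ a : A, a • v = x → IsUnit a) :
    closure (orbit H x) = closure (orbit H v) := by
  have : ContinuousConstSMul H V :=
    ⟨fun h ↦ (Algebra.lsmul K K V ((h : Aˣ) : A)).continuous_of_finiteDimensional⟩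
  exact (closure_orbit_subset_of_mem hx).antisymm
    (closure_orbit_subset_of_mem (mem_closure_orbit_of_isUnit (K := K) hx hunit))

end Orbits

section GeneralLinearGroup

variable {K : Type*} [Field K] {n : ℕ} (G : Subgroup (GL (Fin n) K))

def glAdjoin : Subalgebra K (Module.End K (Fin n → K)) :=
  Algebra.adjoin K
    (Set.range fun g : G ↦ Matrix.toLinAlgEquiv' ((g : GL (Fin n) K) : Matrix (Fin n) (Fin n) K))

theorem isMulCommutative_glAdjoin (hG : ∀ A ∈ G, ∀ B ∈ G, A * B = B * A) :
    IsMulCommutative (glAdjoin G) := by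
  refine Algebra.isMulCommutative_adjoin K ?_
  rintro _ ⟨g, rfl⟩ _ ⟨h, rfl⟩
  simp only [← map_mul, ← Units.val_mul, hG g g.2 h h.2]

def glUnits : G →* (glAdjoin G)ˣ :=
  MonoidHom.toHomUnits
    { toFun g := ⟨Matrix.toLinAlgEquiv' ((g : GL (Fin n) K) : Matrix (Fin n) (Fin n) K),
        Algebra.subset_adjoin ⟨g, rfl⟩⟩
      map_one' := Subtype.ext (map_one _)
      map_mul' _ _ := Subtype.ext (map_mul _ _ _) }

theorem glUnits_smul (g : G) (v : Fin n → K) :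
    glUnits G g • v = ((g : GL (Fin n) K) : Matrix (Fin n) (Fin n) K).mulVec v := rfl

theorem glOrbit_eq_orbit (v : Fin n → K) : glOrbit G v = orbit (glUnits G).range v := by
  ext w
  simp [glOrbit, mem_orbit_iff, glUnits_smul]

end GeneralLinearGroup

theorem structure_theorem_general {K : Type*} [RCLike K] (n : ℕ)
    (G : Subgroup (Matrix.GeneralLinearGroup (Fin n) K))
    (hGcomm : ∀ A ∈ G, ∀ B ∈ G, A * B = B * A) :
    ∃ U : Set (Fin n → K),
      IsOpen U ∧ Dense U ∧
      (∀ A ∈ G, ∀ v ∈ U, (A : Matrix (Fin n) (Fin n) K).mulVec v ∈ U) ∧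
      (∀ v : Fin n → K, glOrbit G v ⊆ U →
        ∀ x ∈ closure (glOrbit G v) ∩ U,
          closure (glOrbit G x) ∩ U = closure (glOrbit G v) ∩ U) ∧
      (∃ (r : ℕ) (V : Fin r → Submodule K (Fin n → K)), r ≤ n ∧
        (∀ k, ∀ A ∈ G, ∀ x ∈ V k, (A : Matrix (Fin n) (Fin n) K).mulVec x ∈ V k) ∧
        (∀ k, Module.finrank K (V k) = n - 1 ∨ Module.finrank K (V k) = n - 2) ∧
        Uᶜ = ⋃ k, (V k : Set (Fin n → K))) := by
  -- synthesized before the commutative ring structure is added, which makes the search time out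
  have : IsScalarTower K (glAdjoin G) (Fin n → K) := inferInstance
  have := isMulCommutative_glAdjoin G hGcomm
  let : CommRing (glAdjoin G) := { mul_comm := mul_comm' }
  obtain ⟨r, Y, hr, hY, hunit⟩ :=
    exists_isCoatom_forall_isUnit (K := K) (V := Fin n → K) (A := glAdjoin G)
  refine ⟨(⋃ k, (Y k : Set (Fin n → K)))ᶜ,
    (isClosed_iUnion_of_finite fun k ↦
      ((Y k).restrictScalars K).closed_of_finiteDimensional).isOpen_compl,
    dense_compl_iUnion_submodule (Y := fun k ↦ (Y k).restrictScalars K) fun k h ↦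
      (hY k).1 ((Submodule.restrictScalars_eq_top_iff _ _ _).mp h),
    fun g hg v hv ↦ ?_, fun v _ x ⟨hx, hxU⟩ ↦ ?_, r, fun k ↦ (Y k).restrictScalars K,
    by simpa using hr, fun k g hg x hx ↦ (Y k).smul_mem (glUnits G ⟨g, hg⟩ : glAdjoin G) hx,
    fun k ↦ by simpa using finrank_restrictScalars_of_isCoatom (K := K) (hY k),
    (compl_compl _).trans rfl⟩
  · simp only [Set.mem_compl_iff, Set.mem_iUnion, SetLike.mem_coe, not_exists] at hv ⊢
    exact fun k hk ↦
      hv k ((Submodule.smul_mem_iff_of_isUnit (Y k) (glUnits G ⟨g, hg⟩).isUnit).mp hk)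
  · rw [glOrbit_eq_orbit] at hx ⊢
    rw [glOrbit_eq_orbit, closure_orbit_eq_of_isUnit (K := K) hx fun a hav ↦
      hunit a v fun k hk ↦ hxU (Set.mem_iUnion.mpr ⟨k, hav ▸ hk⟩)]

/-- **Structure's Theorem.** Let `K = ℝ` or `ℂ`, `n ≥ 1`, and let `G` be an abelian subgroup of
`GL(n, K)`. Then there is a `G`-invariant dense open set `U ⊆ Kⁿ` such that (i) every orbit
contained in `U` is minimal in `U`, and (ii) `Kⁿ \ U` is a union of at most `n` `G`-invariant
`K`-linear subspaces of `Kⁿ` of dimension `n-1` or `n-2` over `K`. -/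
theorem structure_theorem {K : Type*} [RCLike K] (n : ℕ) (hn : 1 ≤ n)
    (G : Subgroup (Matrix.GeneralLinearGroup (Fin n) K))
    (hGcomm : ∀ A ∈ G, ∀ B ∈ G, A * B = B * A) :
    ∃ U : Set (Fin n → K),
      IsOpen U ∧ Dense U ∧
      (∀ A ∈ G, ∀ v ∈ U, (A : Matrix (Fin n) (Fin n) K).mulVec v ∈ U) ∧
      (∀ v : Fin n → K, glOrbit G v ⊆ U →
        ∀ x ∈ closure (glOrbit G v) ∩ U,
          closure (glOrbit G x) ∩ U = closure (glOrbit G v) ∩ U) ∧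
      (∃ (r : ℕ) (V : Fin r → Submodule K (Fin n → K)), r ≤ n ∧
        (∀ k, ∀ A ∈ G, ∀ x ∈ V k, (A : Matrix (Fin n) (Fin n) K).mulVec x ∈ V k) ∧
        (∀ k, Module.finrank K (V k) = n - 1 ∨ Module.finrank K (V k) = n - 2) ∧
        Uᶜ = ⋃ k, (V k : Set (Fin n → K))) :=
  structure_theorem_general n G hGcomm
end

section
/- Let K be ℝ or ℂ and let G be an abelian subgroup of GL(n,K). Then there do not exist points x_1, …, x_{n+1} ∈ K^n − {0} such that closure(G(x_1)) ⊆ closure(G(x_2)) ⊆ … ⊆ closure(G(x_{n+1})) with the n+1 closures pairwise distinct. (Equivalently, G has height at most n.) -/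
/-!
Let `G` be abelian, acting linearly on a finite-dimensional space, and `W` the span of `G • z`.
An operator `T` in the linear span of `G` commutes with `G`, so its restriction to `W` is
determined by `T z`, linearly; hence `‖g • w‖ ≤ C ‖g • z‖ ‖w‖` for `g ∈ G` and `w ∈ W`.
If `z` lies in the closure of `G • y` and `y ∈ W`, pick `g • y` close to `z`: applied to
`w = z - g • y` this bound makes `g⁻¹ • z` close to `y`. So orbit closures spanning the same
subspace coincide, and a strict chain of orbit closures of nonzero vectors yields a strict chain of
nonzero subspaces, which has at most `n` members.
-/

open Module Submodule MulAction

theorem LinearMap.exists_norm_le_mul_norm_of_ker_le {𝕜 M E F : Type*}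
    [NontriviallyNormedField 𝕜] [CompleteSpace 𝕜] [AddCommGroup M] [Module 𝕜 M]
    [FiniteDimensional 𝕜 M] [NormedAddCommGroup E] [NormedSpace 𝕜 E]
    [NormedAddCommGroup F] [NormedSpace 𝕜 F] (f : M →ₗ[𝕜] E) (g : M →ₗ[𝕜] F)
    (h : ker f ≤ ker g) : ∃ C > 0, ∀ x, ‖g x‖ ≤ C * ‖f x‖ := by
  let φ : range f →L[𝕜] F :=
    LinearMap.toContinuousLinearMap ((ker f).liftQ g h ∘ₗ f.quotKerEquivRange.symm.toLinearMap)
  refine ⟨‖φ‖ + 1, by positivity, fun x => ?_⟩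
  calc ‖g x‖ = ‖φ ⟨f x, mem_range_self f x⟩‖ := by simp [φ]
    _ ≤ ‖φ‖ * ‖f x‖ := φ.le_opNorm _
    _ ≤ (‖φ‖ + 1) * ‖f x‖ := by gcongr; linarith

theorem Submodule.span_le_span_of_closure_subset_closure {𝕜 E : Type*}
    [NontriviallyNormedField 𝕜] [CompleteSpace 𝕜] [NormedAddCommGroup E] [NormedSpace 𝕜 E]
    [FiniteDimensional 𝕜 E] {s t : Set E} (h : closure s ⊆ closure t) :
    span 𝕜 s ≤ span 𝕜 t :=
  span_le.mpr <| subset_closure.trans <| h.trans <|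
    closure_minimal subset_span (span 𝕜 t).closed_of_finiteDimensional

theorem Submodule.card_le_finrank_of_strictMono {K V : Type*} [DivisionRing K] [AddCommGroup V]
    [Module K V] [FiniteDimensional K V] {k : ℕ} {f : Fin k → Submodule K V}
    (hf : StrictMono f) (hbot : ∀ i, f i ≠ ⊥) : k ≤ finrank K V := by
  have := Finset.card_le_card_of_injOn (fun i => finrank K (f i)) (s := Finset.univ)
    (t := Finset.Icc 1 (finrank K V))
    (fun i _ => Finset.mem_Icc.mpr ⟨one_le_finrank_iff.mpr (hbot i), (f i).finrank_le⟩)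
    (finrank_strictMono.comp hf).injective.injOn
  simpa using this

theorem smul_mem_span_orbit {R M G : Type*} [Semiring R] [AddCommMonoid M] [Module R M]
    [Monoid G] [DistribMulAction G M] [SMulCommClass G R M] (g : G) {z w : M}
    (hw : w ∈ span R (orbit G z)) : g • w ∈ span R (orbit G z) := by
  have : (span R (orbit G z)).map (DistribSMul.toLinearMap R M g) ≤ span R (orbit G z) := by
    rw [map_span, span_le]
    rintro _ ⟨_, ⟨h, rfl⟩, rfl⟩
    exact subset_span ⟨g * h, mul_smul g h z⟩
  exact this (mem_map_of_mem hw)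

theorem closure_orbit_subset_of_mem_closure {M α : Type*} [Monoid M] [TopologicalSpace α]
    [MulAction M α] [ContinuousConstSMul M α] {y z : α} (hz : z ∈ closure (orbit M y)) :
    closure (orbit M z) ⊆ closure (orbit M y) := by
  refine closure_minimal ?_ isClosed_closure
  rintro _ ⟨g, rfl⟩
  exact smul_closure_orbit_subset g y (Set.smul_mem_smul_set hz)

section OrbitClosure

variable {𝕜 E G : Type*} [NontriviallyNormedField 𝕜] [CompleteSpace 𝕜]
  [NormedAddCommGroup E] [NormedSpace 𝕜 E] [FiniteDimensional 𝕜 E]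
  [Group G] [IsMulCommutative G] [DistribMulAction G E] [SMulCommClass G 𝕜 E]

variable (𝕜 G) in
theorem exists_norm_smul_le_mul_norm_smul (z : E) :
    ∃ C > 0, ∀ g : G, ∀ w ∈ span 𝕜 (orbit G z), ‖g • w‖ ≤ C * ‖g • z‖ * ‖w‖ := by
  set ρ : G →* Module.End 𝕜 E := DistribMulAction.toModuleEnd 𝕜 E
  set W := span 𝕜 (orbit G z)
  set A := span 𝕜 (Set.range ρ)
  have hA : A ≤ Subalgebra.toSubmodule (Subalgebra.centralizer 𝕜 (Set.range ρ)) := by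
    refine span_le.mpr ?_
    rintro _ ⟨g, rfl⟩
    rw [SetLike.mem_coe, Subalgebra.mem_toSubmodule, Subalgebra.mem_centralizer_iff]
    rintro _ ⟨h, rfl⟩
    rw [← map_mul, ← map_mul, mul_comm']
  let evz : A →ₗ[𝕜] E := LinearMap.applyₗ z ∘ₗ A.subtype
  let res : A →ₗ[𝕜] W →L[𝕜] E :=
    LinearMap.toContinuousLinearMap.toLinearMap ∘ₗ LinearMap.lcomp 𝕜 E W.subtype ∘ₗ A.subtype
  have hker : LinearMap.ker evz ≤ LinearMap.ker res := by
    intro T hT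
    have hTz : (T : Module.End 𝕜 E) z = 0 := hT
    have hWT : W ≤ LinearMap.ker (T : Module.End 𝕜 E) := by
      refine span_le.mpr ?_
      rintro _ ⟨h, rfl⟩
      have hcomm := (Subalgebra.mem_centralizer_iff 𝕜).mp (hA T.2) (ρ h) ⟨h, rfl⟩
      change (T : Module.End 𝕜 E) (h • z) = 0
      rw [← smul_zero h, ← hTz]
      exact (LinearMap.congr_fun hcomm z).symm
    ext ⟨w, hw⟩
    exact hWT hw
  obtain ⟨C, hC0, hC⟩ := evz.exists_norm_le_mul_norm_of_ker_le res hker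
  refine ⟨C, hC0, fun g w hw => ?_⟩
  have hg : ρ g ∈ A := subset_span ⟨g, rfl⟩
  calc ‖g • w‖ = ‖res ⟨ρ g, hg⟩ ⟨w, hw⟩‖ := rfl
    _ ≤ ‖res ⟨ρ g, hg⟩‖ * ‖w‖ := ContinuousLinearMap.le_opNorm _ _
    _ ≤ C * ‖g • z‖ * ‖w‖ := by gcongr; exact hC _

theorem mem_closure_orbit_of_mem_closure_orbit {y z : E} (hz : z ∈ closure (orbit G y))
    (hy : y ∈ span 𝕜 (orbit G z)) : y ∈ closure (orbit G z) := by
  obtain ⟨C, hC0, hC⟩ := exists_norm_smul_le_mul_norm_smul 𝕜 G z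
  rw [Metric.mem_closure_iff]
  intro ε hε
  set η := min (1 / 2) (ε / (2 * (‖y‖ + 1)))
  have hη0 : 0 < η := by positivity
  have hη_half : η ≤ 1 / 2 := min_le_left _ _
  have hη : η * (2 * (‖y‖ + 1)) ≤ ε := (le_div_iff₀ (by positivity)).mp (min_le_right _ _)
  obtain ⟨_, ⟨g, rfl⟩, hg⟩ := Metric.mem_closure_iff.mp hz (η / C) (by positivity)
  set w := z - g • y
  have hw : w ∈ span 𝕜 (orbit G z) :=
    sub_mem (subset_span (mem_orbit_self z)) (smul_mem_span_orbit g hy)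
  have hCw : C * ‖w‖ ≤ η := by
    rw [← dist_eq_norm]
    exact ((lt_div_iff₀' hC0).mp hg).le
  -- self-referential: `η ≤ 1 / 2` lets the left side absorb the `η * ‖g⁻¹ • z - y‖` term
  have key : ‖g⁻¹ • z - y‖ ≤ η * (‖g⁻¹ • z - y‖ + ‖y‖) :=
    calc ‖g⁻¹ • z - y‖ = ‖g⁻¹ • w‖ := by simp [w, smul_sub]
      _ ≤ C * ‖g⁻¹ • z‖ * ‖w‖ := hC _ _ hw
      _ = C * ‖w‖ * ‖g⁻¹ • z - y + y‖ := by rw [sub_add_cancel]; ring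
      _ ≤ η * (‖g⁻¹ • z - y‖ + ‖y‖) := by gcongr; exact norm_add_le _ _
  refine ⟨g⁻¹ • z, mem_orbit z g⁻¹, ?_⟩
  rw [dist_comm, dist_eq_norm]
  nlinarith [norm_nonneg (g⁻¹ • z - y), norm_nonneg y]

theorem span_orbit_lt_of_closure_orbit_ssubset {x y : E}
    (h : closure (orbit G x) ⊂ closure (orbit G y)) :
    span 𝕜 (orbit G x) < span 𝕜 (orbit G y) := by
  have : ContinuousConstSMul G E :=
    ⟨fun g => (DistribSMul.toLinearMap 𝕜 E g).continuous_of_finiteDimensional⟩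
  refine (span_le_span_of_closure_subset_closure h.subset).lt_of_ne fun heq => h.not_subset ?_
  have hx : x ∈ closure (orbit G y) := h.subset (subset_closure (mem_orbit_self x))
  have hy : y ∈ span 𝕜 (orbit G x) := heq ▸ subset_span (mem_orbit_self y)
  exact closure_orbit_subset_of_mem_closure (mem_closure_orbit_of_mem_closure_orbit hx hy)

variable (𝕜 G) in
theorem card_le_finrank_of_strictMono_closure_orbit {k : ℕ} (x : Fin k → E) (hx : ∀ i, x i ≠ 0)
    (hmono : StrictMono fun i => closure (orbit G (x i))) : k ≤ finrank 𝕜 E :=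
  card_le_finrank_of_strictMono (f := fun i => span 𝕜 (orbit G (x i)))
    (fun _ _ hij => span_orbit_lt_of_closure_orbit_ssubset (hmono hij))
    (fun i => (Submodule.ne_bot_iff _).mpr ⟨x i, subset_span (mem_orbit_self (x i)), hx i⟩)

end OrbitClosure

theorem glOrbit_eq_orbit_map {K : Type*} [Field K] {n : ℕ}
    (G : Subgroup (Matrix.GeneralLinearGroup (Fin n) K)) (v : Fin n → K) :
    glOrbit G v = orbit (G.map Matrix.GeneralLinearGroup.toLin.toMonoidHom) v := by
  ext w
  constructor
  · rintro ⟨A, hA, rfl⟩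
    exact ⟨⟨_, Subgroup.mem_map_of_mem _ hA⟩, rfl⟩
  · rintro ⟨⟨_, A, hA, rfl⟩, rfl⟩
    exact ⟨A, hA, rfl⟩

/-- Let `K = ℝ` or `ℂ` and let `G` be an abelian subgroup of `GL(n, K)`. Then there do not
exist points `x₁, …, x_{n+1} ∈ Kⁿ \ {0}` with `closure(G(x₁)) ⊆ ⋯ ⊆ closure(G(x_{n+1}))`
and the `n+1` closures pairwise distinct; i.e. `G` has height at most `n`. -/
theorem height_le_n {K : Type*} [RCLike K] (n : ℕ)
    (G : Subgroup (Matrix.GeneralLinearGroup (Fin n) K))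
    (hGcomm : ∀ A ∈ G, ∀ B ∈ G, A * B = B * A) :
    ¬ ∃ x : Fin (n + 1) → (Fin n → K),
      (∀ i, x i ≠ 0) ∧
      (∀ i j : Fin (n + 1), i ≤ j → closure (glOrbit G (x i)) ⊆ closure (glOrbit G (x j))) ∧
      (∀ i j : Fin (n + 1), i ≠ j → closure (glOrbit G (x i)) ≠ closure (glOrbit G (x j))) := by
  rintro ⟨x, hx, hmono, hne⟩
  have : IsMulCommutative G := ⟨⟨fun A B => Subtype.ext (hGcomm A A.2 B B.2)⟩⟩
  have hchain : StrictMono fun i =>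
      closure (orbit (G.map Matrix.GeneralLinearGroup.toLin.toMonoidHom) (x i)) := by
    intro i j hij
    simp only [← glOrbit_eq_orbit_map]
    exact (hmono i j hij.le).ssubset_of_ne (hne i j hij.ne)
  have := card_le_finrank_of_strictMono_closure_orbit K _ x hx hchain
  rw [finrank_fin_fun] at this
  omega
end

section
/- Let K be ℝ or ℂ, n ≥ 2, and let G be an abelian subgroup of S_n(K). Suppose the span of F has dimension n−1 and let v_1, …, v_{n−1} ∈ F be vectors spanning F. Then the span of F^(1) has dimension n−2, and moreover some n−2 of the vectors v_1^(1), …, v_{n−1}^(1) are linearly independent (where for x ∈ K^n, x^(1) ∈ K^{n−1} denotes the vector of its first n−1 coordinates). -/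
open Matrix

/-- `B` belongs to `S_N(K)`: lower triangular with all diagonal entries equal. -/
def IsSnMatrix {K : Type*} [Field K] {N : ℕ} (B : Matrix (Fin N) (Fin N) K) : Prop :=
  (∀ i j : Fin N, i < j → B i j = 0) ∧ (∀ i j : Fin N, B i i = B j j)

/-- The set `F = {(B − μ_B I) eᵢ : 1 ≤ i ≤ N−1, B ∈ G}` for a subgroup `G` of `S_N(K)`
(here `μ_B` is the common diagonal entry of `B`). -/
def Fset {K : Type*} [Field K] {N : ℕ} (G : Subgroup (Matrix.GeneralLinearGroup (Fin N) K)) :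
    Set (Fin N → K) :=
  {w | ∃ B ∈ G, ∃ i : Fin N, (i : ℕ) < N - 1 ∧
    w = ((B : Matrix (Fin N) (Fin N) K) -
      (B : Matrix (Fin N) (Fin N) K) i i • (1 : Matrix (Fin N) (Fin N) K)).mulVec
        (Pi.single i 1)}

/-- The set `F⁽¹⁾ = {(B⁽¹⁾ − μ_B I) e'_k : 1 ≤ k ≤ N−2, B ∈ G}`, where `B⁽¹⁾` denotes the
top-left `(N−1)×(N−1)` block of `B`. -/
def Fset1 {K : Type*} [Field K] {n : ℕ}
    (G : Subgroup (Matrix.GeneralLinearGroup (Fin (n + 2)) K)) : Set (Fin (n + 1) → K) :=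
  {w | ∃ B ∈ G, ∃ k : Fin (n + 1), (k : ℕ) < n ∧
    w = (((B : Matrix (Fin (n + 2)) (Fin (n + 2)) K).submatrix Fin.castSucc Fin.castSucc) -
      (B : Matrix (Fin (n + 2)) (Fin (n + 2)) K) k.castSucc k.castSucc •
        (1 : Matrix (Fin (n + 1)) (Fin (n + 1)) K)).mulVec (Pi.single k 1)}

/-!
Lower triangularity makes every vector of `F` vanish in its first coordinate, so rank `n + 1`
forces `span F` to be the whole hyperplane `{x₀ = 0}` of `K^(n+2)`. Dropping the last
coordinate maps this hyperplane onto the hyperplane `{x₀ = 0}` of `K^(n+1)`, and sends each vector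
of `F` either into `F⁽¹⁾` or to `0` (column `i` of `B − μ_B I` vanishes in the rows `j ≤ i`).
As `F⁽¹⁾` lies in the smaller hyperplane as well, `span F⁽¹⁾` is that hyperplane. The truncated
`vₖ` span it too, and a spanning family contains a basis.
-/

open Module Submodule

theorem Matrix.sub_diag_smul_one_mulVec_single_apply_of_le {R : Type*} [Ring R] {N : ℕ}
    {B : Matrix (Fin N) (Fin N) R} (hB : ∀ i j, i < j → B i j = 0) {i j : Fin N} (hji : j ≤ i) :
    ((B - B i i • 1) *ᵥ Pi.single i 1) j = 0 := by
  rcases hji.lt_or_eq with hlt | rfl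
  · simp [hB j i hlt, one_apply_ne hlt.ne]
  · simp

theorem exists_finset_card_eq_finrank_linearIndepOn (K : Type*) {V ι : Type*} [DivisionRing K]
    [AddCommGroup V] [Module K V] [Finite ι] (w : ι → V) :
    ∃ s : Finset ι, s.card = finrank K (span K (Set.range w)) ∧ LinearIndepOn K w s := by
  obtain ⟨b, -, -, hspan, hli⟩ :=
    exists_linearIndepOn_extension (linearIndepOn_empty K w) (Set.subset_univ _)
  have : Fintype b := Fintype.ofFinite b
  refine ⟨b.toFinset, ?_, by simpa using hli⟩
  have hrange : span K (Set.range w) = span K (Set.range fun k : b => w k) := by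
    rw [← Set.image_univ, ← Set.image_eq_range]
    exact le_antisymm (span_le.2 hspan) (span_mono (Set.image_mono (Set.subset_univ _)))
  rw [hrange, finrank_span_eq_card hli, Set.toFinset_card]

section

variable (K : Type*) [Field K]

def headHyperplane (m : ℕ) : Submodule K (Fin (m + 1) → K) :=
  LinearMap.ker (LinearMap.proj 0)

variable {K}

@[simp]
theorem mem_headHyperplane {m : ℕ} {w : Fin (m + 1) → K} : w ∈ headHyperplane K m ↔ w 0 = 0 :=
  Iff.rfl

theorem finrank_headHyperplane (m : ℕ) : finrank K (headHyperplane K m) = m := by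
  have hproj : (LinearMap.proj 0 : (Fin (m + 1) → K) →ₗ[K] K) ≠ 0 := fun h => by
    simpa using LinearMap.congr_fun h (Pi.single 0 1)
  have := Module.Dual.finrank_ker_add_one_of_ne_zero hproj
  simp only [finrank_fin_fun] at this
  exact Nat.add_right_cancel this

theorem map_funLeft_castSucc_headHyperplane (m : ℕ) :
    (headHyperplane K (m + 1)).map (LinearMap.funLeft K K Fin.castSucc) = headHyperplane K m := by
  refine le_antisymm ?_ fun w hw => ⟨Fin.snoc w 0, ?_, ?_⟩
  · rintro _ ⟨w, hw, rfl⟩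
    exact hw
  · rw [SetLike.mem_coe, mem_headHyperplane, ← Fin.castSucc_zero, Fin.snoc_castSucc]
    exact hw
  · funext j
    simp

theorem Fset_subset_headHyperplane {m : ℕ} {G : Subgroup (GeneralLinearGroup (Fin (m + 1)) K)}
    (hG : ∀ B ∈ G, ∀ i j, i < j → (B : Matrix (Fin (m + 1)) (Fin (m + 1)) K) i j = 0) :
    Fset G ⊆ headHyperplane K m := by
  rintro _ ⟨B, hB, i, -, rfl⟩
  exact sub_diag_smul_one_mulVec_single_apply_of_le (hG B hB) (Fin.zero_le i)

theorem Fset1_subset_headHyperplane {n : ℕ} {G : Subgroup (GeneralLinearGroup (Fin (n + 2)) K)}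
    (hG : ∀ B ∈ G, ∀ i j, i < j → (B : Matrix (Fin (n + 2)) (Fin (n + 2)) K) i j = 0) :
    Fset1 G ⊆ headHyperplane K n := by
  rintro _ ⟨B, hB, k, -, rfl⟩
  exact sub_diag_smul_one_mulVec_single_apply_of_le
    (B := (B : Matrix (Fin (n + 2)) (Fin (n + 2)) K).submatrix Fin.castSucc Fin.castSucc)
    (fun i j hij => hG B hB _ _ (Fin.castSucc_lt_castSucc_iff.2 hij)) (Fin.zero_le k)

theorem span_Fset_eq_headHyperplane {m : ℕ} {G : Subgroup (GeneralLinearGroup (Fin (m + 1)) K)}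
    (hG : ∀ B ∈ G, ∀ i j, i < j → (B : Matrix (Fin (m + 1)) (Fin (m + 1)) K) i j = 0)
    (hrank : finrank K (span K (Fset G)) = m) :
    span K (Fset G) = headHyperplane K m :=
  eq_of_le_of_finrank_eq (span_le.2 (Fset_subset_headHyperplane hG))
    (by rw [hrank, finrank_headHyperplane])

theorem funLeft_castSucc_mem_span_Fset1 {n : ℕ}
    {G : Subgroup (GeneralLinearGroup (Fin (n + 2)) K)}
    (hG : ∀ B ∈ G, ∀ i j, i < j → (B : Matrix (Fin (n + 2)) (Fin (n + 2)) K) i j = 0)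
    {w : Fin (n + 2) → K} (hw : w ∈ Fset G) :
    LinearMap.funLeft K K Fin.castSucc w ∈ span K (Fset1 G) := by
  obtain ⟨B, hB, i, -, rfl⟩ := hw
  rcases lt_or_ge (i : ℕ) n with hin | hni
  · obtain ⟨k, rfl⟩ : ∃ k : Fin (n + 1), k.castSucc = i := ⟨⟨i, by omega⟩, rfl⟩
    refine subset_span ⟨B, hB, k, hin, ?_⟩
    funext j
    simp [Matrix.one_apply]
  · convert zero_mem (span K (Fset1 G))
    funext j
    exact sub_diag_smul_one_mulVec_single_apply_of_le (hG B hB)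
      (Fin.le_def.2 (by simp only [Fin.val_castSucc]; omega))

theorem span_Fset1_eq_headHyperplane {n : ℕ}
    {G : Subgroup (GeneralLinearGroup (Fin (n + 2)) K)}
    (hG : ∀ B ∈ G, ∀ i j, i < j → (B : Matrix (Fin (n + 2)) (Fin (n + 2)) K) i j = 0)
    (hrank : finrank K (span K (Fset G)) = n + 1) :
    span K (Fset1 G) = headHyperplane K n := by
  refine le_antisymm (span_le.2 (Fset1_subset_headHyperplane hG)) ?_
  rw [← map_funLeft_castSucc_headHyperplane, ← span_Fset_eq_headHyperplane hG hrank, map_span,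
    span_le]
  rintro _ ⟨w, hw, rfl⟩
  exact funLeft_castSucc_mem_span_Fset1 hG hw

end

theorem rank_Fset1_general {K : Type*} [RCLike K] (n : ℕ)
    (G : Subgroup (Matrix.GeneralLinearGroup (Fin (n + 2)) K))
    (hS : ∀ B ∈ G, IsSnMatrix (B : Matrix (Fin (n + 2)) (Fin (n + 2)) K))
    (hrank : Module.finrank K (Submodule.span K (Fset G)) = n + 1)
    (v : Fin (n + 1) → (Fin (n + 2) → K))
    (hspan : Submodule.span K (Set.range v) = Submodule.span K (Fset G)) :
    Module.finrank K (Submodule.span K (Fset1 G)) = n ∧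
    ∃ s : Finset (Fin (n + 1)), s.card = n ∧
      LinearIndependent K (fun k : s => fun i : Fin (n + 1) => v k i.castSucc) := by
  have hG := fun B hB => (hS B hB).1
  refine ⟨by rw [span_Fset1_eq_headHyperplane hG hrank, finrank_headHyperplane], ?_⟩
  obtain ⟨s, hcard, hli⟩ :=
    exists_finset_card_eq_finrank_linearIndepOn K (LinearMap.funLeft K K Fin.castSucc ∘ v)
  refine ⟨s, ?_, hli⟩
  rw [hcard, Set.range_comp, ← map_span, hspan, span_Fset_eq_headHyperplane hG hrank,
    map_funLeft_castSucc_headHyperplane, finrank_headHyperplane]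

/-- Let `K = ℝ` or `ℂ`, `N = n + 2 ≥ 2`, and let `G` be an abelian subgroup of `S_N(K)`.
If `span F` has dimension `N − 1` and `v₁, …, v_{N−1} ∈ F` span `F`, then `span F⁽¹⁾` has
dimension `N − 2`, and some `N − 2` of the truncated vectors `v₁⁽¹⁾, …, v_{N−1}⁽¹⁾` (keeping
the first `N − 1` coordinates) are linearly independent. -/
theorem rank_Fset1 {K : Type*} [RCLike K] (n : ℕ)
    (G : Subgroup (Matrix.GeneralLinearGroup (Fin (n + 2)) K))
    (hGcomm : ∀ A ∈ G, ∀ B ∈ G, A * B = B * A)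
    (hS : ∀ B ∈ G, IsSnMatrix (B : Matrix (Fin (n + 2)) (Fin (n + 2)) K))
    (hrank : Module.finrank K (Submodule.span K (Fset G)) = n + 1)
    (v : Fin (n + 1) → (Fin (n + 2) → K))
    (hv : ∀ k, v k ∈ Fset G)
    (hspan : Submodule.span K (Set.range v) = Submodule.span K (Fset G)) :
    Module.finrank K (Submodule.span K (Fset1 G)) = n ∧
    ∃ s : Finset (Fin (n + 1)), s.card = n ∧
      LinearIndependent K (fun k : s => fun i : Fin (n + 1) => v k i.castSucc) :=
  rank_Fset1_general n G hS hrank v hspan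
end

section
/- Let K be ℝ or ℂ, n ≥ 2, and let G be an abelian subgroup of S_n(K) such that the span of F has dimension n−1. Let u, v ∈ K^n with first coordinates u_1 ≠ 0 and v_1 ≠ 0, and let (B_m)_{m∈ℕ} be a sequence in G with lim_{m→∞} B_m u = v. If the sequence (B_m^(1))_{m∈ℕ} of top-left (n−1)×(n−1) blocks is bounded, then the sequence (B_m)_{m∈ℕ} is bounded. -/
open Matrix Filter Topology

/-!
Write `Nₘ = Bₘ - μₘ I`. For `A ∈ G` and `i` not the last index, commutativity turns the last
coordinate of `Nₘ (A - μ_A I) eᵢ` into `((A - μ_A I) Nₘ)_{last,i}`, a fixed combination of entries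
of `Nₘ` outside its last row (the corner entry of `A - μ_A I` vanishes), so it is bounded in `m`.
Hence `w ↦ (Nₘ w)_last` is bounded in `m` on `span F`. This span lies in the hyperplane `w₀ = 0`
and has its dimension, so it is that hyperplane: the last row of `Bₘ` is bounded except for its
first entry, which is then bounded because `(Bₘ u)_last` converges and `u₀ ≠ 0`.
-/

section

variable {α : Type*}

def boundedFunctions (𝕜 α E : Type*) [NormedField 𝕜] [SeminormedAddCommGroup E]
    [NormedSpace 𝕜 E] : Submodule 𝕜 (α → E) where
  carrier := {f | ∃ C, ∀ a, ‖f a‖ ≤ C}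
  zero_mem' := ⟨0, fun _ => by simp⟩
  add_mem' := by
    rintro f g ⟨C, hC⟩ ⟨D, hD⟩
    exact ⟨C + D, fun a => (norm_add_le _ _).trans (add_le_add (hC a) (hD a))⟩
  smul_mem' := by
    rintro c f ⟨C, hC⟩
    exact ⟨‖c‖ * C, fun a => (norm_smul c (f a)).trans_le (by gcongr; exact hC a)⟩

section boundedFunctions

variable {𝕜 E : Type*} [NormedField 𝕜] [SeminormedAddCommGroup E] [NormedSpace 𝕜 E]

theorem exists_forall_norm_le_of_forall_mem_boundedFunctions {ι : Type*} [Finite ι]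
    {f : ι → α → E} (hf : ∀ i, f i ∈ boundedFunctions 𝕜 α E) : ∃ C, ∀ a i, ‖f i a‖ ≤ C := by
  choose C hC using hf
  obtain ⟨D, hD⟩ := (Set.finite_range C).bddAbove
  exact ⟨D, fun a i => (hC i a).trans (hD ⟨i, rfl⟩)⟩

theorem Filter.Tendsto.mem_boundedFunctions {f : ℕ → E} {x : E} (h : Tendsto f atTop (𝓝 x)) :
    f ∈ boundedFunctions 𝕜 ℕ E := by
  obtain ⟨C, hC⟩ := h.norm.bddAbove_range
  exact ⟨C, fun m => hC ⟨m, rfl⟩⟩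

end boundedFunctions

section Matrix

variable {K ι : Type*} [NormedField K]

theorem apply_mem_boundedFunctions_of_dotProduct [Fintype ι] [DecidableEq ι] {x : α → ι → K}
    {u : ι → K} {k : ι} (hu : u k ≠ 0) (hdot : (fun a => x a ⬝ᵥ u) ∈ boundedFunctions K α K)
    (hx : ∀ j ≠ k, (fun a => x a j) ∈ boundedFunctions K α K) :
    (fun a => x a k) ∈ boundedFunctions K α K := by
  have hsolve : (fun a => x a k) = (u k)⁻¹ •
      ((fun a => x a ⬝ᵥ u) - ∑ j ∈ Finset.univ.erase k, u j • fun a => x a j) := by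
    funext a
    simp only [dotProduct, ← Finset.add_sum_erase _ _ (Finset.mem_univ k)]
    simp [Finset.sum_apply, hu, mul_comm]
  rw [hsolve]
  refine Submodule.smul_mem _ _ (Submodule.sub_mem _ hdot (Submodule.sum_mem _ fun j hj => ?_))
  exact Submodule.smul_mem _ _ (hx j (Finset.ne_of_mem_erase hj))

theorem sub_smul_one_apply_mem_boundedFunctions_iff [DecidableEq ι] {M : α → Matrix ι ι K}
    {c : α → K} (hc : c ∈ boundedFunctions K α K) (k i : ι) :
    (fun a => (M a - c a • 1) k i) ∈ boundedFunctions K α K ↔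
      (fun a => M a k i) ∈ boundedFunctions K α K := by
  have hsplit :
      (fun a => (M a - c a • 1) k i) = (fun a => M a k i) - (1 : Matrix ι ι K) k i • c := by
    funext a
    simp [mul_comm]
  rw [hsplit]
  exact Submodule.sub_mem_iff_left _ (Submodule.smul_mem _ _ hc)

def mulVecCoord [Fintype ι] (M : α → Matrix ι ι K) (r : ι) : (ι → K) →ₗ[K] (α → K) :=
  LinearMap.pi fun a => LinearMap.proj r ∘ₗ (M a).mulVecLin

theorem mulVecCoord_apply [Fintype ι] (M : α → Matrix ι ι K) (r : ι) (w : ι → K) (a : α) :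
    mulVecCoord M r w a = (M a *ᵥ w) r :=
  rfl

theorem mulVecCoord_single_one [Fintype ι] [DecidableEq ι] (M : α → Matrix ι ι K) (r j : ι) :
    mulVecCoord M r (Pi.single j 1) = fun a => M a r j := by
  funext a
  simp [mulVecCoord_apply]

theorem mulVec_single_mem_comap_mulVecCoord [Fintype ι] [DecidableEq ι] {M : α → Matrix ι ι K}
    {P : Matrix ι ι K} {r i : ι} (hcomm : ∀ a, Commute (M a) P) (hP : P r r = 0)
    (hM : ∀ k ≠ r, (fun a => M a k i) ∈ boundedFunctions K α K) :
    P *ᵥ Pi.single i 1 ∈ (boundedFunctions K α K).comap (mulVecCoord M r) := by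
  have hexpand : mulVecCoord M r (P *ᵥ Pi.single i 1) =
      ∑ k ∈ Finset.univ.erase r, P r k • fun a => M a k i := by
    funext a
    rw [mulVecCoord_apply, mulVec_mulVec, (hcomm a).eq, mulVec_single_one, col_apply,
      Matrix.mul_apply, ← Finset.add_sum_erase _ _ (Finset.mem_univ r), hP]
    simp [Finset.sum_apply, mul_comm]
  rw [Submodule.mem_comap, hexpand]
  exact Submodule.sum_mem _ fun k hk => Submodule.smul_mem _ _ (hM k (Finset.ne_of_mem_erase hk))

end Matrix

theorem Commute.sub_smul_one {R A : Type*} [CommSemiring R] [Ring A] [Algebra R A] {x y : A}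
    (h : Commute x y) (c d : R) : Commute (x - c • 1) (y - d • 1) :=
  (h.sub_right ((Commute.one_right x).smul_right d)).sub_left
    ((Commute.one_left _).smul_left c)

theorem IsSnMatrix.sub_smul_one_apply_eq_zero {K : Type*} [Field K] {N : ℕ}
    {A : Matrix (Fin N) (Fin N) K} (hA : IsSnMatrix A) (k : Fin N) {i j : Fin N} (hij : i ≤ j) :
    (A - A k k • (1 : Matrix (Fin N) (Fin N) K)) i j = 0 := by
  rcases hij.lt_or_eq with h | rfl
  · simp [hA.1 i j h, one_apply_ne h.ne]
  · simp [hA.2 i k]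

theorem IsSnMatrix.apply_mem_boundedFunctions {K : Type*} [NormedField K] {n : ℕ}
    {M : α → Matrix (Fin (n + 1)) (Fin (n + 1)) K} (hS : ∀ a, IsSnMatrix (M a))
    (hblock : ∀ i j, i ≠ Fin.last n → j ≠ Fin.last n →
      (fun a => M a i j) ∈ boundedFunctions K α K)
    (hlast : ∀ j, (fun a => M a (Fin.last n) j) ∈ boundedFunctions K α K) (i j : Fin (n + 1)) :
    (fun a => M a i j) ∈ boundedFunctions K α K := by
  by_cases hi : i = Fin.last n
  · exact hi ▸ hlast j
  rcases lt_or_ge i j with hij | hji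
  · have hzero : (fun a => M a i j) = 0 := funext fun a => (hS a).1 i j hij
    exact hzero ▸ Submodule.zero_mem _
  · exact hblock i j hi (hji.trans_lt (Fin.lt_last_iff_ne_last.2 hi)).ne

theorem span_Fset_eq_ker_proj_zero {K : Type*} [Field K] {n : ℕ}
    {G : Subgroup (GL (Fin (n + 1)) K)}
    (hS : ∀ A ∈ G, IsSnMatrix (A : Matrix (Fin (n + 1)) (Fin (n + 1)) K))
    (hrank : Module.finrank K (Submodule.span K (Fset G)) = n) :
    Submodule.span K (Fset G) = LinearMap.ker (LinearMap.proj (R := K) (φ := fun _ => K) 0) := by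
  refine Submodule.eq_of_le_of_finrank_eq ?_ ?_
  · rw [Submodule.span_le]
    rintro _ ⟨A, hA, i, -, rfl⟩
    simp [(hS A hA).sub_smul_one_apply_eq_zero i (Fin.zero_le i)]
  · have h := LinearMap.finrank_range_add_finrank_ker
      (LinearMap.proj (R := K) (φ := fun _ : Fin (n + 1) => K) 0)
    rw [LinearMap.range_eq_top.2 fun k => ⟨Pi.single 0 k, by simp⟩] at h
    simp only [finrank_top, Module.finrank_self, Module.finrank_fin_fun] at h
    omega

theorem Fset_subset_comap_mulVecCoord {K : Type*} [NormedField K] {n : ℕ}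
    {G : Subgroup (GL (Fin (n + 1)) K)} (hGcomm : ∀ A ∈ G, ∀ B ∈ G, A * B = B * A)
    (hS : ∀ A ∈ G, IsSnMatrix (A : Matrix (Fin (n + 1)) (Fin (n + 1)) K))
    {B : α → GL (Fin (n + 1)) K} (hB : ∀ a, B a ∈ G) {c : α → K}
    (hblock : ∀ k i, k ≠ Fin.last n → i ≠ Fin.last n →
      (fun a => ((B a : Matrix (Fin (n + 1)) (Fin (n + 1)) K) - c a • 1) k i) ∈
        boundedFunctions K α K) :
    Fset G ⊆ (boundedFunctions K α K).comap
      (mulVecCoord (fun a => (B a : Matrix (Fin (n + 1)) (Fin (n + 1)) K) - c a • 1)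
        (Fin.last n)) := by
  rintro _ ⟨A, hA, i, hi, rfl⟩
  have hi' : i ≠ Fin.last n := by rintro rfl; simp at hi
  exact mulVec_single_mem_comap_mulVecCoord
    (fun a => (Commute.units_val (hGcomm _ (hB a) _ hA)).sub_smul_one _ _)
    ((hS A hA).sub_smul_one_apply_eq_zero i le_rfl) fun k hk => hblock k i hk hi'

end

theorem bounded_of_block_bounded_general {K : Type*} [RCLike K] (n : ℕ)
    (G : Subgroup (Matrix.GeneralLinearGroup (Fin (n + 2)) K))
    (hGcomm : ∀ A ∈ G, ∀ B ∈ G, A * B = B * A)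
    (hS : ∀ B ∈ G, IsSnMatrix (B : Matrix (Fin (n + 2)) (Fin (n + 2)) K))
    (hrank : Module.finrank K (Submodule.span K (Fset G)) = n + 1)
    (u v : Fin (n + 2) → K) (hu : u 0 ≠ 0)
    (B : ℕ → Matrix.GeneralLinearGroup (Fin (n + 2)) K) (hB : ∀ m, B m ∈ G)
    (hlim : Tendsto (fun m => (B m : Matrix (Fin (n + 2)) (Fin (n + 2)) K).mulVec u)
      atTop (𝓝 v))
    (hblock : ∃ C : ℝ, ∀ m, ∀ i j : Fin (n + 1),
      ‖(B m : Matrix (Fin (n + 2)) (Fin (n + 2)) K) i.castSucc j.castSucc‖ ≤ C) :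
    ∃ C : ℝ, ∀ m, ∀ i j : Fin (n + 2),
      ‖(B m : Matrix (Fin (n + 2)) (Fin (n + 2)) K) i j‖ ≤ C := by
  set b := fun m => (B m : Matrix (Fin (n + 2)) (Fin (n + 2)) K)
  have hblock' : ∀ i j, i ≠ Fin.last _ → j ≠ Fin.last _ →
      (fun m => b m i j) ∈ boundedFunctions K ℕ K := by
    obtain ⟨C, hC⟩ := hblock
    intro i j hi hj
    obtain ⟨i, rfl⟩ := Fin.exists_castSucc_eq.2 hi
    obtain ⟨j, rfl⟩ := Fin.exists_castSucc_eq.2 hj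
    exact ⟨C, fun m => hC m i j⟩
  have hdiag : (fun m => b m 0 0) ∈ boundedFunctions K ℕ K :=
    hblock' 0 0 Fin.last_pos.ne Fin.last_pos.ne
  have hrow : ∀ j ≠ 0, (fun m => b m (Fin.last _) j) ∈ boundedFunctions K ℕ K := by
    intro j hj
    have hspan := Submodule.span_le.2 <| Fset_subset_comap_mulVecCoord hGcomm hS hB
      fun k i hk hi =>
        (sub_smul_one_apply_mem_boundedFunctions_iff hdiag k i).2 (hblock' k i hk hi)
    rw [span_Fset_eq_ker_proj_zero hS hrank] at hspan
    refine (sub_smul_one_apply_mem_boundedFunctions_iff hdiag _ j).1 ?_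
    have hsingle := hspan (x := Pi.single j 1) (by simp [hj.symm])
    rwa [Submodule.mem_comap, mulVecCoord_single_one] at hsingle
  have hcorner : (fun m => b m (Fin.last _) 0) ∈ boundedFunctions K ℕ K :=
    apply_mem_boundedFunctions_of_dotProduct hu
      ((tendsto_pi_nhds.1 hlim (Fin.last _)).mem_boundedFunctions) hrow
  have hentry : ∀ i j, (fun m => b m i j) ∈ boundedFunctions K ℕ K :=
    IsSnMatrix.apply_mem_boundedFunctions (fun m => hS _ (hB m)) hblock'
      fun j => by rcases eq_or_ne j 0 with rfl | hj; exacts [hcorner, hrow j hj]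
  obtain ⟨C, hC⟩ := exists_forall_norm_le_of_forall_mem_boundedFunctions
    (f := fun (p : Fin (n + 2) × Fin (n + 2)) m => b m p.1 p.2) fun p => hentry p.1 p.2
  exact ⟨C, fun m i j => hC m (i, j)⟩

/-- Let `K = ℝ` or `ℂ`, `N = n + 2 ≥ 2`, and let `G` be an abelian subgroup of `S_N(K)` with
`span F` of dimension `N − 1`. Let `u, v ∈ Kⁿ` with nonzero first coordinates and `(B_m)` a
sequence in `G` with `lim B_m u = v`. If the sequence of top-left `(N−1)×(N−1)` blocks
`(B_m⁽¹⁾)` is bounded, then `(B_m)` is bounded. -/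
theorem bounded_of_block_bounded {K : Type*} [RCLike K] (n : ℕ)
    (G : Subgroup (Matrix.GeneralLinearGroup (Fin (n + 2)) K))
    (hGcomm : ∀ A ∈ G, ∀ B ∈ G, A * B = B * A)
    (hS : ∀ B ∈ G, IsSnMatrix (B : Matrix (Fin (n + 2)) (Fin (n + 2)) K))
    (hrank : Module.finrank K (Submodule.span K (Fset G)) = n + 1)
    (u v : Fin (n + 2) → K) (hu : u 0 ≠ 0) (hv : v 0 ≠ 0)
    (B : ℕ → Matrix.GeneralLinearGroup (Fin (n + 2)) K) (hB : ∀ m, B m ∈ G)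
    (hlim : Tendsto (fun m => (B m : Matrix (Fin (n + 2)) (Fin (n + 2)) K).mulVec u)
      atTop (𝓝 v))
    (hblock : ∃ C : ℝ, ∀ m, ∀ i j : Fin (n + 1),
      ‖(B m : Matrix (Fin (n + 2)) (Fin (n + 2)) K) i.castSucc j.castSucc‖ ≤ C) :
    ∃ C : ℝ, ∀ m, ∀ i j : Fin (n + 2),
      ‖(B m : Matrix (Fin (n + 2)) (Fin (n + 2)) K) i j‖ ≤ C :=
  bounded_of_block_bounded_general n G hGcomm hS hrank u v hu B hB hlim hblock
end

section
/- Let K be ℝ or ℂ and let G be an abelian subgroup of S_n(K). For every u ∈ K^n, the K-linear subspace H_u of K^n spanned by {u} ∪ F is G-invariant; in particular, the span F̄ of F is a G-invariant subspace of K^n. -/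
open Matrix

/-- Key lemma: for `B ∈ G` with common diagonal entry `μ`, the vector
`(B − μI) *ᵥ v` lies in the span of `Fset G` for every `v`. -/
theorem sub_mulVec_mem_span {K : Type*} [RCLike K] {n : ℕ}
    (G : Subgroup (Matrix.GeneralLinearGroup (Fin n) K))
    (hS : ∀ B ∈ G, IsSnMatrix (B : Matrix (Fin n) (Fin n) K))
    (B : Matrix.GeneralLinearGroup (Fin n) K) (hB : B ∈ G) (μ : K)
    (hμ : ∀ i : Fin n, (B : Matrix (Fin n) (Fin n) K) i i = μ) (v : Fin n → K) :
    ((B : Matrix (Fin n) (Fin n) K) - μ • (1 : Matrix (Fin n) (Fin n) K)).mulVec v ∈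
      Submodule.span K (Fset G) := by
  set M : Matrix (Fin n) (Fin n) K :=
    (B : Matrix (Fin n) (Fin n) K) - μ • (1 : Matrix (Fin n) (Fin n) K) with hM
  have hv : M.mulVec v = ∑ i : Fin n, v i • M.mulVec (Pi.single i 1) := by
    ext j
    simp [Matrix.mulVec, dotProduct, Finset.sum_apply, Pi.single_apply, mul_comm]
  rw [hv]
  refine Submodule.sum_mem _ fun i _ => Submodule.smul_mem _ _ ?_
  by_cases hi : (i : ℕ) < n - 1
  · refine Submodule.subset_span ?_
    refine ⟨B, hB, i, hi, ?_⟩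
    rw [hM, hμ i]
  · -- then `i` is the last index and the column is zero
    have hlast : ∀ j : Fin n, j ≤ i := by
      intro j
      have : (i : ℕ) = n - 1 := by omega
      exact Fin.le_def.mpr (by omega)
    have hz : M.mulVec (Pi.single i 1) = 0 := by
      ext j
      rcases lt_or_eq_of_le (hlast j) with h | h
      · simp [hM, Matrix.mulVec_single, Matrix.sub_apply, Matrix.smul_apply,
          Matrix.one_apply, (hS B hB).1 j i h, Fin.ne_of_lt h]
      · subst h
        simp [hM, Matrix.mulVec_single, Matrix.sub_apply, Matrix.smul_apply,
          Matrix.one_apply, hμ j]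
    rw [hz]
    exact Submodule.zero_mem _

theorem mulVec_mem_span_aux {K : Type*} [RCLike K] {n : ℕ}
    (G : Subgroup (Matrix.GeneralLinearGroup (Fin n) K))
    (hS : ∀ B ∈ G, IsSnMatrix (B : Matrix (Fin n) (Fin n) K))
    (B : Matrix.GeneralLinearGroup (Fin n) K) (hB : B ∈ G)
    (s : Set (Fin n → K)) (hs : Fset G ⊆ s)
    (x : Fin n → K) (hx : x ∈ Submodule.span K s) :
    (B : Matrix (Fin n) (Fin n) K).mulVec x ∈ Submodule.span K s := by
  rcases Nat.eq_zero_or_pos n with h0 | hpos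
  · subst h0
    have : (B : Matrix (Fin 0) (Fin 0) K).mulVec x = x := Subsingleton.elim _ _
    rwa [this]
  · set μ : K := (B : Matrix (Fin n) (Fin n) K) ⟨0, hpos⟩ ⟨0, hpos⟩ with hμdef
    have hμ : ∀ i : Fin n, (B : Matrix (Fin n) (Fin n) K) i i = μ :=
      fun i => (hS B hB).2 i ⟨0, hpos⟩
    have hdec : (B : Matrix (Fin n) (Fin n) K).mulVec x =
        μ • x + ((B : Matrix (Fin n) (Fin n) K) - μ • 1).mulVec x := by
      rw [Matrix.sub_mulVec]
      ext j
      simp [Matrix.smul_mulVec, Matrix.one_mulVec]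
    rw [hdec]
    refine Submodule.add_mem _ (Submodule.smul_mem _ _ hx) ?_
    exact Submodule.span_mono hs (sub_mulVec_mem_span G hS B hB μ hμ x)

/-- Let `K = ℝ` or `ℂ` and let `G` be an abelian subgroup of `S_n(K)`. For every `u ∈ Kⁿ`,
the subspace `H_u = span({u} ∪ F)` is `G`-invariant; in particular the span of `F` is a
`G`-invariant subspace of `Kⁿ`. -/
theorem span_invariant {K : Type*} [RCLike K] (n : ℕ)
    (G : Subgroup (Matrix.GeneralLinearGroup (Fin n) K))
    (hGcomm : ∀ A ∈ G, ∀ B ∈ G, A * B = B * A)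
    (hS : ∀ B ∈ G, IsSnMatrix (B : Matrix (Fin n) (Fin n) K)) :
    (∀ u : Fin n → K, ∀ B ∈ G, ∀ x ∈ Submodule.span K ({u} ∪ Fset G),
      (B : Matrix (Fin n) (Fin n) K).mulVec x ∈ Submodule.span K ({u} ∪ Fset G)) ∧
    (∀ B ∈ G, ∀ x ∈ Submodule.span K (Fset G),
      (B : Matrix (Fin n) (Fin n) K).mulVec x ∈ Submodule.span K (Fset G)) := by
  constructor
  · intro u B hB x hx
    exact mulVec_mem_span_aux G hS B hB _ Set.subset_union_right x hx
  · intro B hB x hx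
    exact mulVec_mem_span_aux G hS B hB _ subset_rfl x hx
end

section
/- Let K be ℝ or ℂ and let G be an abelian subgroup of S_n(K). Let u, v ∈ K^n with first coordinates u_1 ≠ 0 and v_1 ≠ 0, and let (B_m)_{m∈ℕ} be a sequence in G with lim_{m→∞} B_m u = v. Then there exist a G-invariant K-linear subspace H of K^n and a basis (u, w_1, …, w_p) of H whose first vector is u, such that: (i) for every B ∈ G, the matrix of the restriction of B to H in this basis is lower triangular with all its diagonal entries equal (i.e. lies in S_{p+1}(K)); (ii) the sequence of matrices of the restrictions of B_m to H in this basis is bounded. -/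
/-! The span `H` of the `G`-orbit of `u` is `G`-invariant. Intersecting `H` with the flag
`F_k = {x | x_0 = ⋯ = x_{k-1} = 0}` gives a filtration of `H` whose successive quotients have
dimension at most one, and an echelon basis adapted to it can be started with `u`, since
`u_0 ≠ 0`. Each `A ∈ G` preserves every `F_k` and acts on `F_k / F_{k+1}` by its diagonal scalar,
so its matrix in this basis lies in `S_{p+1}`. As `G` is abelian, `B_m (A u) = A (B_m u) → A v`,
so `B_m` converges pointwise on `H`; hence the matrix entries of `B_m` on `H` converge and are
bounded. -/

open Matrix Filter Topology

open Module

theorem Submodule.comap_le_span_singleton_sup_comap {K V V' : Type*} [Ring K] [AddCommGroup V]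
    [Module K V] [AddCommGroup V'] [Module K V'] (f : V' →ₗ[K] V) {N N' : Submodule K V} {y : V'}
    (h : N ≤ K ∙ f y ⊔ N') : N.comap f ≤ K ∙ y ⊔ N'.comap f := by
  intro z hz
  obtain ⟨_, ha, t, ht, hat⟩ := Submodule.mem_sup.mp (h hz)
  obtain ⟨a, rfl⟩ := Submodule.mem_span_singleton.mp ha
  refine Submodule.mem_sup.mpr
    ⟨a • y, Submodule.smul_mem _ _ (Submodule.mem_span_singleton_self y), z - a • y, ?_,
      add_sub_cancel _ _⟩
  simpa [← hat] using ht

section IsAdaptedFamily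

variable {K V : Type*} [DivisionRing K] [AddCommGroup V] [Module K V] (W : ℕ → Submodule K V)

/-- An echelon basis of `W k` with respect to the filtration `W`. -/
structure IsAdaptedFamily (k : ℕ) {p : ℕ} (w : Fin p → V) : Prop where
  linearIndependent : LinearIndependent K w
  span_eq : Submodule.span K (Set.range w) = W k
  le_span_Ioi : ∀ j, ∃ l, w j ∈ W l ∧ W (l + 1) ≤ Submodule.span K (w '' Set.Ioi j)

variable {W}

theorem IsAdaptedFamily.cons {k p : ℕ} {w : Fin p → V} {y : V}
    (hw : IsAdaptedFamily W (k + 1) w) (hle : W (k + 1) ≤ W k) (hy : y ∈ W k) (hy' : y ∉ W (k + 1))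
    (hcodim : W k ≤ K ∙ y ⊔ W (k + 1)) :
    IsAdaptedFamily W k (Fin.cons y w : Fin (p + 1) → V) where
  linearIndependent := linearIndependent_finCons.mpr ⟨hw.linearIndependent, hw.span_eq ▸ hy'⟩
  span_eq := by
    rw [Fin.range_cons, Submodule.span_insert, hw.span_eq]
    exact le_antisymm (sup_le ((Submodule.span_singleton_le_iff_mem _ _).mpr hy) hle) hcodim
  le_span_Ioi j := by
    cases j using Fin.cases with
    | zero =>
      refine ⟨k, hy, hw.span_eq ▸ Submodule.span_mono ?_⟩
      rintro _ ⟨i, rfl⟩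
      exact ⟨i.succ, Fin.succ_pos i, Fin.cons_succ _ _ _⟩
    | succ j =>
      obtain ⟨l, hl, hle⟩ := hw.le_span_Ioi j
      refine ⟨l, by simpa using hl, hle.trans (Submodule.span_mono ?_)⟩
      rintro _ ⟨i, hi, rfl⟩
      exact ⟨i.succ, Fin.succ_lt_succ_iff.mpr hi, Fin.cons_succ _ _ _⟩

theorem IsAdaptedFamily.sub_smul_mem_span {k p : ℕ} {w : Fin p → V} (hw : IsAdaptedFamily W k w)
    {f : V →ₗ[K] V} {c : K} (hf : ∀ l, ∀ x ∈ W l, f x - c • x ∈ W (l + 1)) (j : Fin p) :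
    f (w j) - c • w j ∈ Submodule.span K (w '' Set.Ioi j) :=
  let ⟨l, hl, hle⟩ := hw.le_span_Ioi j
  hle (hf l _ hl)

theorem exists_isAdaptedFamily (hle : ∀ k, W (k + 1) ≤ W k)
    (hcodim : ∀ k, ∀ y ∈ W k, y ∉ W (k + 1) → W k ≤ K ∙ y ⊔ W (k + 1)) {n : ℕ} (hbot : W n = ⊥)
    {k : ℕ} (hk : k ≤ n) : ∃ p, ∃ w : Fin p → V, IsAdaptedFamily W k w := by
  induction hk using Nat.decreasingInduction with
  | self => exact ⟨0, Fin.elim0, linearIndependent_empty_type, by simp [hbot], fun j => j.elim0⟩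
  | of_succ k _ ih =>
    obtain ⟨p, w, hw⟩ := ih
    by_cases h : W k ≤ W (k + 1)
    · exact ⟨p, w, { hw with span_eq := hw.span_eq.trans (le_antisymm (hle k) h) }⟩
    · obtain ⟨y, hy, hy'⟩ := SetLike.not_le_iff_exists.mp h
      exact ⟨p + 1, _, hw.cons (hle k) hy hy' (hcodim k y hy hy')⟩

theorem exists_basis_isAdaptedFamily (hle : ∀ k, W (k + 1) ≤ W k)
    (hcodim : ∀ k, ∀ y ∈ W k, y ∉ W (k + 1) → W k ≤ K ∙ y ⊔ W (k + 1)) {n : ℕ} (hbot : W n = ⊥)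
    (htop : W 0 = ⊤) (hn : 1 ≤ n) {u : V} (hu : u ∉ W 1) :
    ∃ p, ∃ b : Basis (Fin (p + 1)) K V, b 0 = u ∧ IsAdaptedFamily W 0 b := by
  obtain ⟨p, w, hw⟩ := exists_isAdaptedFamily hle hcodim hbot hn
  have hu0 : u ∈ W 0 := htop ▸ Submodule.mem_top
  have hw' := hw.cons (hle 0) hu0 hu (hcodim 0 u hu0 hu)
  exact ⟨p, Basis.mk hw'.linearIndependent (by rw [hw'.span_eq, htop]), by simp,
    by simpa using hw'⟩

end IsAdaptedFamily

def coordFlag (K : Type*) [Semiring K] (n k : ℕ) : Submodule K (Fin n → K) where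
  carrier := {x | ∀ i : Fin n, (i : ℕ) < k → x i = 0}
  add_mem' hx hy i hi := by simp [hx i hi, hy i hi]
  zero_mem' _ _ := rfl
  smul_mem' c x hx i hi := by simp [hx i hi]

section coordFlag

variable {K : Type*} {n : ℕ}

theorem coordFlag_zero [Semiring K] : coordFlag K n 0 = ⊤ :=
  eq_top_iff.mpr fun _ _ _ hi => absurd hi (Nat.not_lt_zero _)

theorem coordFlag_self [Semiring K] : coordFlag K n n = ⊥ :=
  eq_bot_iff.mpr fun _ hx => funext fun i => hx i i.isLt

theorem coordFlag_succ_le [Semiring K] (k : ℕ) : coordFlag K n (k + 1) ≤ coordFlag K n k :=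
  fun _ hx i hi => hx i (Nat.lt_succ_of_lt hi)

theorem coordFlag_le_span_singleton_sup [DivisionRing K] {k : ℕ} {y : Fin n → K}
    (hy : y ∈ coordFlag K n k) (hy' : y ∉ coordFlag K n (k + 1)) :
    coordFlag K n k ≤ K ∙ y ⊔ coordFlag K n (k + 1) := by
  obtain ⟨i, hik, hyi⟩ : ∃ i : Fin n, (i : ℕ) < k + 1 ∧ y i ≠ 0 := by
    simpa [coordFlag] using hy'
  have hi : (i : ℕ) = k := le_antisymm (Nat.le_of_lt_succ hik) (not_lt.mp fun h => hyi (hy i h))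
  intro z hz
  refine Submodule.mem_sup.mpr ⟨(z i / y i) • y,
    Submodule.smul_mem _ _ (Submodule.mem_span_singleton_self y), z - (z i / y i) • y,
    fun j hj => ?_, add_sub_cancel _ _⟩
  rcases (Nat.lt_succ_iff_lt_or_eq.mp hj) with hj | hj
  · simp [hz j hj, hy j hj]
  · obtain rfl : j = i := Fin.ext (hj.trans hi.symm)
    simp [div_mul_cancel₀ _ hyi]

theorem IsSnMatrix.mulVec_sub_smul_mem_coordFlag [Field K] {A : Matrix (Fin n) (Fin n) K}
    (hA : IsSnMatrix A) (i₀ : Fin n) {k : ℕ} {x : Fin n → K} (hx : x ∈ coordFlag K n k) :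
    A *ᵥ x - A i₀ i₀ • x ∈ coordFlag K n (k + 1) := by
  intro i hi
  have hAx : (A *ᵥ x) i = A i i * x i := by
    refine Finset.sum_eq_single i (fun j _ hji => ?_) (absurd (Finset.mem_univ i))
    rcases lt_or_gt_of_ne hji with h | h
    · simp [hx j (lt_of_lt_of_le h (Nat.le_of_lt_succ hi))]
    · simp [hA.1 i j h]
  simp [hAx, hA.2 i i₀]

theorem exists_basis_isAdaptedFamily_coordFlag [Field K] (H : Submodule K (Fin n → K))
    (hn : 0 < n) {u : Fin n → K} (huH : u ∈ H) (hu : u ⟨0, hn⟩ ≠ 0) :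
    ∃ p, ∃ b : Basis (Fin (p + 1)) K H, (b 0 : Fin n → K) = u ∧
      IsAdaptedFamily (fun k => (coordFlag K n k).comap H.subtype) 0 b := by
  obtain ⟨p, b, hb0, hb⟩ := exists_basis_isAdaptedFamily
    (W := fun k => (coordFlag K n k).comap H.subtype)
    (fun k => Submodule.comap_mono (coordFlag_succ_le k))
    (fun _ _ hy hy' =>
      Submodule.comap_le_span_singleton_sup_comap _ (coordFlag_le_span_singleton_sup hy hy'))
    (by simp only [coordFlag_self, Submodule.comap_bot, Submodule.ker_subtype])
    (by simp only [coordFlag_zero, Submodule.comap_top]) hn (u := ⟨u, huH⟩)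
    (fun h => hu (h ⟨0, hn⟩ Nat.one_pos))
  exact ⟨p, b, congrArg Subtype.val hb0, hb⟩

end coordFlag

theorem isSnMatrix_toMatrix_of_sub_smul_mem_span {K V : Type*} [Field K] [AddCommGroup V]
    [Module K V] {N : ℕ} (b : Basis (Fin N) K V) (f : V →ₗ[K] V) (c : K)
    (h : ∀ j, f (b j) - c • b j ∈ Submodule.span K (b '' Set.Ioi j)) :
    IsSnMatrix (LinearMap.toMatrix b b f) := by
  have entry : ∀ i j, i ≤ j → LinearMap.toMatrix b b f i j = if i = j then c else 0 := by
    intro i j hij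
    have hzero : b.repr (f (b j) - c • b j) i = 0 :=
      Finsupp.notMem_support_iff.mp fun hi =>
        not_lt.mpr hij (b.repr_support_subset_of_mem_span _ (h j) hi)
    rw [LinearMap.toMatrix_apply, ← sub_add_cancel (f (b j)) (c • b j), map_add, Finsupp.add_apply,
      hzero, map_smul, b.repr_self, Finsupp.smul_apply, Finsupp.single_apply]
    simp [eq_comm]
  exact ⟨fun i j hij => by simpa [hij.ne] using entry i j hij.le,
    fun i j => by rw [entry i i le_rfl, entry j j le_rfl, if_pos rfl, if_pos rfl]⟩

def convergenceSubmodule {R M M₂ : Type*} [Semiring R] [AddCommMonoid M] [Module R M]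
    [AddCommMonoid M₂] [Module R M₂] [TopologicalSpace M₂] [ContinuousAdd M₂]
    [ContinuousConstSMul R M₂] (T : ℕ → M →ₗ[R] M₂) : Submodule R M where
  carrier := {x | ∃ y, Tendsto (fun m => T m x) atTop (𝓝 y)}
  add_mem' := fun ⟨y, hy⟩ ⟨z, hz⟩ => ⟨y + z, by simpa using hy.add hz⟩
  zero_mem' := ⟨0, by simpa using tendsto_const_nhds⟩
  smul_mem' c _ := fun ⟨y, hy⟩ => ⟨c • y, by simpa using hy.const_smul c⟩

theorem exists_tendsto_restrict {K E : Type*} [NontriviallyNormedField K] [CompleteSpace K]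
    [NormedAddCommGroup E] [NormedSpace K E] (H : Submodule K E) [FiniteDimensional K H]
    {T : ℕ → E →ₗ[K] E} (hH : ∀ m, ∀ x ∈ H, T m x ∈ H) (hT : H ≤ convergenceSubmodule T)
    (x : H) : ∃ y : H, Tendsto (fun m => (T m).restrict (hH m) x) atTop (𝓝 y) := by
  obtain ⟨y, hy⟩ := hT x.2
  have hyH : y ∈ H := H.closed_of_finiteDimensional.mem_of_tendsto hy
    (Eventually.of_forall fun m => hH m x x.2)
  exact ⟨⟨y, hyH⟩, tendsto_subtype_rng.mpr hy⟩

theorem exists_bound_toMatrix_of_tendsto {K V ι : Type*} [NontriviallyNormedField K]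
    [CompleteSpace K] [NormedAddCommGroup V] [NormedSpace K V] [FiniteDimensional K V]
    [Fintype ι] [DecidableEq ι] (b : Basis ι K V) {T : ℕ → V →ₗ[K] V}
    (hT : ∀ x, ∃ y, Tendsto (fun m => T m x) atTop (𝓝 y)) :
    ∃ C : ℝ, ∀ m i j, ‖LinearMap.toMatrix b b (T m) i j‖ ≤ C := by
  choose y hy using fun j => hT (b j)
  have hcont : Continuous b.equivFun := b.equivFun.toLinearMap.continuous_of_finiteDimensional
  have hlim : Tendsto (fun m j => b.equivFun (T m (b j))) atTop (𝓝 fun j => b.equivFun (y j)) :=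
    tendsto_pi_nhds.mpr fun j => (hcont.tendsto _).comp (hy j)
  obtain ⟨C, hC⟩ := hlim.norm.bddAbove_range
  refine ⟨C, fun m i j => ?_⟩
  calc ‖LinearMap.toMatrix b b (T m) i j‖ = ‖b.equivFun (T m (b j)) i‖ := by
        rw [LinearMap.toMatrix_apply, b.equivFun_apply]
    _ ≤ ‖fun j => b.equivFun (T m (b j))‖ :=
        (norm_le_pi_norm _ i).trans (norm_le_pi_norm (fun j => b.equivFun (T m (b j))) j)
    _ ≤ C := hC ⟨m, rfl⟩

section Orbit

variable {K : Type*} {n : ℕ}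

def matrixOrbit [Field K] (G : Subgroup (GL (Fin n) K)) (u : Fin n → K) : Set (Fin n → K) :=
  (fun A : GL (Fin n) K => (A : Matrix (Fin n) (Fin n) K) *ᵥ u) '' G

theorem mulVec_mem_span_matrixOrbit [Field K] {G : Subgroup (GL (Fin n) K)} {u : Fin n → K}
    {A : GL (Fin n) K} (hA : A ∈ G) {x : Fin n → K}
    (hx : x ∈ Submodule.span K (matrixOrbit G u)) :
    (A : Matrix (Fin n) (Fin n) K) *ᵥ x ∈ Submodule.span K (matrixOrbit G u) := by
  have hmap : (Submodule.span K (matrixOrbit G u)).map (A : Matrix (Fin n) (Fin n) K).mulVecLin ≤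
      Submodule.span K (matrixOrbit G u) := by
    rw [Submodule.map_span_le]
    rintro _ ⟨C, hC, rfl⟩
    exact Submodule.subset_span ⟨A * C, G.mul_mem hA hC, by simp [mulVec_mulVec]⟩
  exact hmap (Submodule.mem_map_of_mem hx)

theorem span_matrixOrbit_le_convergenceSubmodule [RCLike K] {G : Subgroup (GL (Fin n) K)}
    (hcomm : ∀ A ∈ G, ∀ B ∈ G, A * B = B * A) {u v : Fin n → K} {B : ℕ → GL (Fin n) K}
    (hB : ∀ m, B m ∈ G)
    (hlim : Tendsto (fun m => (B m : Matrix (Fin n) (Fin n) K) *ᵥ u) atTop (𝓝 v)) :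
    Submodule.span K (matrixOrbit G u) ≤
      convergenceSubmodule fun m => (B m : Matrix (Fin n) (Fin n) K).mulVecLin := by
  rw [Submodule.span_le]
  rintro _ ⟨A, hA, rfl⟩
  refine ⟨(A : Matrix (Fin n) (Fin n) K) *ᵥ v,
    ((continuous_const.matrix_mulVec continuous_id).tendsto v |>.comp hlim).congr fun m => ?_⟩
  change (A : Matrix (Fin n) (Fin n) K) *ᵥ ((B m : Matrix (Fin n) (Fin n) K) *ᵥ u) =
    (B m : Matrix (Fin n) (Fin n) K) *ᵥ ((A : Matrix (Fin n) (Fin n) K) *ᵥ u)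
  rw [mulVec_mulVec, mulVec_mulVec, ← Units.val_mul, ← Units.val_mul, hcomm A hA (B m) (hB m)]

end Orbit

theorem exists_invariant_subspace_bounded_general {K : Type*} [RCLike K] (n : ℕ) (hn : 0 < n)
    (G : Subgroup (Matrix.GeneralLinearGroup (Fin n) K))
    (hGcomm : ∀ A ∈ G, ∀ B ∈ G, A * B = B * A)
    (hS : ∀ B ∈ G, IsSnMatrix (B : Matrix (Fin n) (Fin n) K))
    (u v : Fin n → K) (hu : u ⟨0, hn⟩ ≠ 0)
    (B : ℕ → Matrix.GeneralLinearGroup (Fin n) K) (hB : ∀ m, B m ∈ G)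
    (hlim : Tendsto (fun m => (B m : Matrix (Fin n) (Fin n) K).mulVec u) atTop (𝓝 v)) :
    ∃ (H : Submodule K (Fin n → K)) (p : ℕ) (b : Module.Basis (Fin (p + 1)) K H)
      (hinv : ∀ A ∈ G, ∀ x ∈ H, (A : Matrix (Fin n) (Fin n) K).mulVec x ∈ H),
      ((b 0 : Fin n → K) = u) ∧
      (∀ A : Matrix.GeneralLinearGroup (Fin n) K, ∀ hA : A ∈ G,
        IsSnMatrix (LinearMap.toMatrix b b
          ((Matrix.mulVecLin (A : Matrix (Fin n) (Fin n) K)).restrict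
            (fun x hx => hinv A hA x hx)))) ∧
      (∃ C : ℝ, ∀ m, ∀ i j : Fin (p + 1),
        ‖LinearMap.toMatrix b b
          ((Matrix.mulVecLin (B m : Matrix (Fin n) (Fin n) K)).restrict
            (fun x hx => hinv (B m) (hB m) x hx)) i j‖ ≤ C) := by
  set H := Submodule.span K (matrixOrbit G u)
  have hinv : ∀ A ∈ G, ∀ x ∈ H, (A : Matrix (Fin n) (Fin n) K) *ᵥ x ∈ H :=
    fun _ hA _ hx => mulVec_mem_span_matrixOrbit hA hx
  have huH : u ∈ H := Submodule.subset_span ⟨1, G.one_mem, by simp⟩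
  obtain ⟨p, b, hb0, hb⟩ := exists_basis_isAdaptedFamily_coordFlag H hn huH hu
  refine ⟨H, p, b, hinv, hb0, fun A hA => ?_, ?_⟩
  · exact isSnMatrix_toMatrix_of_sub_smul_mem_span b _ _ <| hb.sub_smul_mem_span fun _ _ hx =>
      (hS A hA).mulVec_sub_smul_mem_coordFlag ⟨0, hn⟩ hx
  · exact exists_bound_toMatrix_of_tendsto b <| exists_tendsto_restrict H _ <|
      span_matrixOrbit_le_convergenceSubmodule hGcomm hB hlim

/-- Let `K = ℝ` or `ℂ` and `G` an abelian subgroup of `S_n(K)`. For all `u, v ∈ Kⁿ` with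
nonzero first coordinates and every sequence `(B_m)` in `G` with `lim B_m u = v`, there are a
`G`-invariant subspace `H ⊆ Kⁿ` and a basis `(u, w₁, …, w_p)` of `H` with first vector `u`
such that: (i) for every `A ∈ G` the matrix of the restriction of `A` to `H` in this basis is
lower triangular with equal diagonal entries (lies in `S_{p+1}(K)`); (ii) the sequence of the
matrices of the restrictions of `B_m` to `H` in this basis is bounded. -/
theorem exists_invariant_subspace_bounded {K : Type*} [RCLike K] (n : ℕ) (hn : 0 < n)
    (G : Subgroup (Matrix.GeneralLinearGroup (Fin n) K))
    (hGcomm : ∀ A ∈ G, ∀ B ∈ G, A * B = B * A)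
    (hS : ∀ B ∈ G, IsSnMatrix (B : Matrix (Fin n) (Fin n) K))
    (u v : Fin n → K) (hu : u ⟨0, hn⟩ ≠ 0) (hv : v ⟨0, hn⟩ ≠ 0)
    (B : ℕ → Matrix.GeneralLinearGroup (Fin n) K) (hB : ∀ m, B m ∈ G)
    (hlim : Tendsto (fun m => (B m : Matrix (Fin n) (Fin n) K).mulVec u) atTop (𝓝 v)) :
    ∃ (H : Submodule K (Fin n → K)) (p : ℕ) (b : Module.Basis (Fin (p + 1)) K H)
      (hinv : ∀ A ∈ G, ∀ x ∈ H, (A : Matrix (Fin n) (Fin n) K).mulVec x ∈ H),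
      ((b 0 : Fin n → K) = u) ∧
      (∀ A : Matrix.GeneralLinearGroup (Fin n) K, ∀ hA : A ∈ G,
        IsSnMatrix (LinearMap.toMatrix b b
          ((Matrix.mulVecLin (A : Matrix (Fin n) (Fin n) K)).restrict
            (fun x hx => hinv A hA x hx)))) ∧
      (∃ C : ℝ, ∀ m, ∀ i j : Fin (p + 1),
        ‖LinearMap.toMatrix b b
          ((Matrix.mulVecLin (B m : Matrix (Fin n) (Fin n) K)).restrict
            (fun x hx => hinv (B m) (hB m) x hx)) i j‖ ≤ C) :=
  exists_invariant_subspace_bounded_general n hn G hGcomm hS u v hu B hB hlim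
end

section
/- Let K be ℝ or ℂ and let G be an abelian subgroup of S_n(K). For all u, v ∈ K^n with first coordinates u_1 ≠ 0 and v_1 ≠ 0, and for every sequence (B_m)_{m∈ℕ} in G such that lim_{m→∞} B_m u = v, one has lim_{m→∞} B_m^{-1} v = u. -/
open Matrix Filter Topology

/-!
Let `W` be the linear span of `G`. As `W` is finite-dimensional, the convergent sequence
`B m *ᵥ u ∈ W *ᵥ u` lifts to a convergent sequence `D m → T` in `W` with `D m *ᵥ u = B m *ᵥ u` and
`T *ᵥ u = v`. Here `T` is invertible, being lower triangular with constant diagonal `T₀₀ ≠ 0`, since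
`T₀₀ u₀ = v₀ ≠ 0`. Since `W` commutes with `G`, `D m *ᵥ (B m⁻¹ *ᵥ u) = B m⁻¹ *ᵥ (D m *ᵥ u) = u`, so
`B m⁻¹ *ᵥ u = (D m)⁻¹ *ᵥ u → T⁻¹ *ᵥ u`, and `B m⁻¹ *ᵥ v = T *ᵥ (B m⁻¹ *ᵥ u) → u`.
-/

section LiftAlongLinearMap

variable {K E F : Type*} [NontriviallyNormedField K] [CompleteSpace K]
  [AddCommGroup E] [TopologicalSpace E] [IsTopologicalAddGroup E] [Module K E]
  [ContinuousSMul K E] [FiniteDimensional K E]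
  [AddCommGroup F] [TopologicalSpace F] [IsTopologicalAddGroup F] [Module K F]
  [ContinuousSMul K F] [T2Space F]

/-- Lift along a linear section of `f` over its range: it is continuous, and the range is closed,
both by finite-dimensionality. -/
theorem LinearMap.exists_tendsto_of_tendsto_of_mem_range {α : Type*} {l : Filter α} [l.NeBot]
    (f : E →ₗ[K] F) {x : α → F} {y : F} (hx : ∀ a, x a ∈ LinearMap.range f)
    (hxy : Tendsto x l (𝓝 y)) :
    ∃ e : α → E, ∃ e₀ : E, (∀ a, f (e a) = x a) ∧ f e₀ = y ∧ Tendsto e l (𝓝 e₀) := by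
  have hy : y ∈ LinearMap.range f :=
    (LinearMap.range f).closed_of_finiteDimensional.mem_of_tendsto hxy (.of_forall hx)
  obtain ⟨g, hg⟩ := f.rangeRestrict.exists_rightInverse_of_surjective f.range_rangeRestrict
  have hfg : ∀ z : LinearMap.range f, f (g z) = z := fun z =>
    congrArg Subtype.val (LinearMap.congr_fun hg z)
  refine ⟨fun a => g ⟨x a, hx a⟩, g ⟨y, hy⟩, fun a => hfg _, hfg _, ?_⟩
  exact (g.continuous_of_finiteDimensional.tendsto _).comp (tendsto_subtype_rng.mpr hxy)

end LiftAlongLinearMap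

theorem Matrix.tendsto_of_mulVec_eq {ι K α : Type*} [Fintype ι] [DecidableEq ι] [NormedField K]
    {l : Filter α} {D : α → Matrix ι ι K} {T : Matrix ι ι K} {y : α → ι → K} {u : ι → K}
    (hD : Tendsto D l (𝓝 T)) (hT : IsUnit T.det) (hy : ∀ a, D a *ᵥ y a = u) :
    Tendsto y l (𝓝 (T⁻¹ *ᵥ u)) := by
  have hinv : Tendsto (fun a => (D a)⁻¹) l (𝓝 T⁻¹) := by
    refine (continuousAt_matrix_inv T ?_).tendsto.comp hD
    simpa only [Ring.inverse_eq_inv'] using continuousAt_inv₀ hT.ne_zero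
  have hdet : ∀ᶠ a in l, IsUnit (D a).det :=
    (((continuous_id.matrix_det).tendsto T).comp hD).eventually_ne hT.ne_zero |>.mono
      fun _ h => isUnit_iff_ne_zero.mpr h
  have hy_eq : ∀ᶠ a in l, (D a)⁻¹ *ᵥ u = y a := hdet.mono fun a ha => by
    rw [← hy a, mulVec_mulVec, nonsing_inv_mul _ ha, one_mulVec]
  exact (((continuous_id.matrix_mulVec continuous_const).tendsto _).comp hinv).congr' hy_eq

def snSubmodule (K : Type*) [Field K] (N : ℕ) : Submodule K (Matrix (Fin N) (Fin N) K) where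
  carrier := {B | IsSnMatrix B}
  add_mem' {A B} hA hB :=
    ⟨fun i j h => by simp [hA.1 i j h, hB.1 i j h], fun i j => by simp [hA.2 i j, hB.2 i j]⟩
  zero_mem' := ⟨fun _ _ _ => rfl, fun _ _ => rfl⟩
  smul_mem' c B hB := ⟨fun i j h => by simp [hB.1 i j h], fun i j => by simp [hB.2 i j]⟩

namespace IsSnMatrix

variable {K : Type*} [Field K] {N : ℕ} {B : Matrix (Fin N) (Fin N) K}

theorem det_eq (hB : IsSnMatrix B) (i : Fin N) : B.det = B i i ^ N := by
  rw [det_of_isLowerTriangular B fun j k h => hB.1 j k h]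
  simp [hB.2 _ i]

theorem mulVec_apply_zero (hB : IsSnMatrix B) (hN : 0 < N) (u : Fin N → K) :
    (B *ᵥ u) ⟨0, hN⟩ = B ⟨0, hN⟩ ⟨0, hN⟩ * u ⟨0, hN⟩ := by
  rw [mulVec, dotProduct]
  refine Fintype.sum_eq_single _ fun j hj => ?_
  rw [hB.1 _ j (lt_of_le_of_ne (Nat.zero_le j.val) (Ne.symm hj)), zero_mul]

theorem isUnit_det (hB : IsSnMatrix B) (hN : 0 < N) {u : Fin N → K}
    (hu : (B *ᵥ u) ⟨0, hN⟩ ≠ 0) : IsUnit B.det := by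
  rw [hB.det_eq ⟨0, hN⟩, isUnit_iff_ne_zero]
  refine pow_ne_zero _ fun h => hu ?_
  rw [hB.mulVec_apply_zero hN, h, zero_mul]

end IsSnMatrix

theorem tendsto_inv_of_tendsto_general {K : Type*} [RCLike K] (n : ℕ) (hn : 0 < n)
    (G : Subgroup (Matrix.GeneralLinearGroup (Fin n) K))
    (hGcomm : ∀ A ∈ G, ∀ B ∈ G, A * B = B * A)
    (hS : ∀ B ∈ G, IsSnMatrix (B : Matrix (Fin n) (Fin n) K))
    (u v : Fin n → K) (hv : v ⟨0, hn⟩ ≠ 0)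
    (B : ℕ → Matrix.GeneralLinearGroup (Fin n) K) (hB : ∀ m, B m ∈ G)
    (hlim : Tendsto (fun m => (B m : Matrix (Fin n) (Fin n) K).mulVec u) atTop (𝓝 v)) :
    Tendsto (fun m => ((B m)⁻¹ : Matrix (Fin n) (Fin n) K).mulVec v) atTop (𝓝 u) := by
  set W := Submodule.span K ((↑) '' (G : Set (GL (Fin n) K)) : Set (Matrix (Fin n) (Fin n) K))
  have hWG : ∀ A ∈ W, ∀ g ∈ G, Commute A (g : Matrix (Fin n) (Fin n) K) := fun A hA g hg =>
    Commute.span_left (by rintro _ ⟨h, hh, rfl⟩; exact congrArg Units.val (hGcomm h hh g hg)) A hA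
  have hWS : W ≤ snSubmodule K n := Submodule.span_le.mpr (by rintro _ ⟨g, hg, rfl⟩; exact hS g hg)
  let ev : W →ₗ[K] (Fin n → K) := ((mulVecBilin K K).flip u).comp W.subtype
  obtain ⟨D, T, hDu, hTu, hDT⟩ := ev.exists_tendsto_of_tendsto_of_mem_range
    (fun m => ⟨⟨B m, Submodule.subset_span ⟨B m, hB m, rfl⟩⟩, rfl⟩) hlim
  replace hDu : ∀ m, (D m : Matrix (Fin n) (Fin n) K) *ᵥ u = B m *ᵥ u := hDu
  replace hTu : (T : Matrix (Fin n) (Fin n) K) *ᵥ u = v := hTu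
  have hT : IsUnit (T : Matrix (Fin n) (Fin n) K).det := (hWS T.2).isUnit_det hn (hTu ▸ hv)
  have hDB : ∀ m, (D m : Matrix (Fin n) (Fin n) K) *ᵥ
      ((↑(B m)⁻¹ : Matrix (Fin n) (Fin n) K) *ᵥ u) = u := fun m => by
    rw [mulVec_mulVec, (hWG _ (D m).2 _ (G.inv_mem (hB m))).eq, ← mulVec_mulVec, hDu m,
      mulVec_mulVec, Units.inv_mul, one_mulVec]
  have hBv : ∀ m, (↑(B m)⁻¹ : Matrix (Fin n) (Fin n) K) *ᵥ v =
      T *ᵥ ((↑(B m)⁻¹ : Matrix (Fin n) (Fin n) K) *ᵥ u) := fun m => by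
    rw [← hTu, mulVec_mulVec, mulVec_mulVec, (hWG _ T.2 _ (G.inv_mem (hB m))).eq]
  have hBu := tendsto_of_mulVec_eq ((continuous_subtype_val.tendsto T).comp hDT) hT hDB
  have hTT : (T : Matrix (Fin n) (Fin n) K) *ᵥ ((T : Matrix (Fin n) (Fin n) K)⁻¹ *ᵥ u) = u := by
    rw [mulVec_mulVec, mul_nonsing_inv _ hT, one_mulVec]
  simp only [← coe_units_inv, hBv]
  exact ((continuous_const.matrix_mulVec continuous_id).tendsto' _ u hTT).comp hBu

/-- Let `K = ℝ` or `ℂ` and let `G` be an abelian subgroup of `S_n(K)`. For all `u, v ∈ Kⁿ`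
with nonzero first coordinates and every sequence `(B_m)` in `G` with `lim B_m u = v`, one has
`lim B_m⁻¹ v = u`. -/
theorem tendsto_inv_of_tendsto {K : Type*} [RCLike K] (n : ℕ) (hn : 0 < n)
    (G : Subgroup (Matrix.GeneralLinearGroup (Fin n) K))
    (hGcomm : ∀ A ∈ G, ∀ B ∈ G, A * B = B * A)
    (hS : ∀ B ∈ G, IsSnMatrix (B : Matrix (Fin n) (Fin n) K))
    (u v : Fin n → K) (hu : u ⟨0, hn⟩ ≠ 0) (hv : v ⟨0, hn⟩ ≠ 0)
    (B : ℕ → Matrix.GeneralLinearGroup (Fin n) K) (hB : ∀ m, B m ∈ G)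
    (hlim : Tendsto (fun m => (B m : Matrix (Fin n) (Fin n) K).mulVec u) atTop (𝓝 v)) :
    Tendsto (fun m => ((B m)⁻¹ : Matrix (Fin n) (Fin n) K).mulVec v) atTop (𝓝 u) :=
  tendsto_inv_of_tendsto_general n hn G hGcomm hS u v hv B hB hlim
end

section
/- The subgroup H = ℤ·(1,1) + ℤ·(√3, √2) + ℤ·(√2, 1) of (ℝ², +), i.e. H = {(n + m√3 + p√2, n + m√2 + p) : n, m, p ∈ ℤ}, is dense in ℝ². -/
/-!
`H` is the `ℤ`-span of three `ℤ`-linearly independent vectors of `ℝ²`, so it is not discrete: a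
discrete subgroup of `ℝⁿ` has `ℤ`-rank at most `n`. Its nonzero elements of arbitrarily small norm
have directions accumulating at some unit vector `u`, and integer multiples of them fill the line
`ℝ u` inside the closure of `H`. Projecting along that line by `v ↦ u ∧ v`, the image of `H` in `ℝ`
is dense or cyclic. If it is dense, so is `H`; if it were cyclic, eliminating `u` from the images of
the three generators would give an integer relation between `1`, `√2` and `√3`, forcing `u = 0`.
-/

open Filter Topology Set

theorem Irrational.eq_zero_of_intCast_mul_add_eq_zero {x : ℝ} (hx : Irrational x) {m n : ℤ}
    (h : m * x + n = 0) : m = 0 ∧ n = 0 := by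
  by_cases hm : m = 0
  · subst hm
    exact ⟨rfl, by simpa using h⟩
  · exact absurd h ((hx.intCast_mul hm).add_intCast n).ne_zero

theorem eq_zero_of_mul_sqrt_three_add_mul_sqrt_two_add_eq_zero {a b c : ℤ}
    (h : a * √3 + b * √2 + c = 0) : a = 0 ∧ b = 0 ∧ c = 0 := by
  have h2 : √2 * √2 = 2 := Real.mul_self_sqrt (by norm_num)
  have h3 : √3 * √3 = 3 := Real.mul_self_sqrt (by norm_num)
  -- squaring `a √3 = -(b √2 + c)` leaves `√2` as the only irrationality
  have hsq : ((2 * b * c : ℤ) : ℝ) * √2 + ((2 * b ^ 2 + c ^ 2 - 3 * a ^ 2 : ℤ) : ℝ) = 0 := by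
    push_cast
    linear_combination (b * √2 + c - a * √3) * h - b ^ 2 * h2 + a ^ 2 * h3
  have hbc : b * c = 0 := by
    have := (irrational_sqrt_two.eq_zero_of_intCast_mul_add_eq_zero hsq).1
    linarith
  rcases mul_eq_zero.mp hbc with rfl | rfl
  · obtain ⟨ha, hc⟩ := Nat.prime_three.irrational_sqrt.eq_zero_of_intCast_mul_add_eq_zero
      (m := a) (n := c) (by push_cast at h ⊢; linarith)
    exact ⟨ha, rfl, hc⟩
  · have h6 : √3 * √2 = √6 := by rw [← Real.sqrt_mul (by norm_num)]; norm_num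
    obtain ⟨ha, hb⟩ := (show Irrational √6 by norm_num).eq_zero_of_intCast_mul_add_eq_zero
      (m := a) (n := 2 * b) (by push_cast at h ⊢; linear_combination √2 * h - a * h6 - b * h2)
    exact ⟨ha, by omega, rfl⟩

theorem AddSubgroup.exists_ne_zero_norm_lt_of_not_discreteTopology {E : Type*}
    [SeminormedAddGroup E] {H : AddSubgroup E} (hH : ¬DiscreteTopology H) {ε : ℝ} (hε : 0 < ε) :
    ∃ g ∈ H, g ≠ 0 ∧ ‖g‖ < ε := by
  contrapose! hH
  exact DiscreteTopology.of_forall_le_norm hε fun g hg ↦ hH g g.2 (by simpa using hg)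

theorem not_discreteTopology_span_of_linearIndependent {E ι : Type*} [NormedAddCommGroup E]
    [NormedSpace ℝ E] [FiniteDimensional ℝ E] [Fintype ι] {b : ι → E}
    (hb : LinearIndependent ℤ b) (hcard : Module.finrank ℝ E < Fintype.card ι) :
    ¬DiscreteTopology (Submodule.span ℤ (range b)) := by
  intro hd
  have hrank := Real.finrank_eq_int_finrank_of_discrete hd
  rw [Set.finrank, Set.finrank, finrank_span_eq_card hb] at hrank
  have := (Submodule.span ℝ (range b)).finrank_le
  omega

theorem tendsto_floor_div_mul {ι : Type*} {l : Filter ι} {r : ι → ℝ} (hr : ∀ i, 0 < r i)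
    (hr₀ : Tendsto r l (𝓝 0)) (t : ℝ) : Tendsto (fun i ↦ ⌊t / r i⌋ * r i) l (𝓝 t) := by
  have hlow : Tendsto (fun i ↦ t - r i) l (𝓝 t) := by simpa using tendsto_const_nhds.sub hr₀
  refine tendsto_of_tendsto_of_tendsto_of_le_of_le hlow tendsto_const_nhds (fun i ↦ ?_) fun i ↦ ?_
  · have := (div_lt_iff₀ (hr i)).mp (Int.lt_floor_add_one (t / r i))
    dsimp only
    linarith
  · exact (le_div_iff₀ (hr i)).mp (Int.floor_le _)

theorem AddSubgroup.smul_mem_topologicalClosure_of_tendsto {E ι : Type*} [NormedAddCommGroup E]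
    [NormedSpace ℝ E] {l : Filter ι} [l.NeBot] (H : AddSubgroup E) {g : ι → E} {u : E}
    (hgH : ∀ i, g i ∈ H) (hg₀ : ∀ i, g i ≠ 0) (hg : Tendsto g l (𝓝 0))
    (hu : Tendsto (fun i ↦ ‖g i‖⁻¹ • g i) l (𝓝 u)) (t : ℝ) : t • u ∈ H.topologicalClosure := by
  have hpos : ∀ i, 0 < ‖g i‖ := fun i ↦ norm_pos_iff.mpr (hg₀ i)
  have hlim := (tendsto_floor_div_mul hpos (tendsto_norm_zero.comp hg) t).smul hu
  refine mem_closure_of_tendsto hlim (Eventually.of_forall fun i ↦ ?_)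
  have : (⌊t / ‖g i‖⌋ * ‖g i‖) • ‖g i‖⁻¹ • g i = ⌊t / ‖g i‖⌋ • g i := by
    rw [smul_smul, mul_assoc, mul_inv_cancel₀ (hpos i).ne', mul_one, Int.cast_smul_eq_zsmul]
  rw [this]
  exact H.zsmul_mem (hgH i) _

theorem AddSubgroup.exists_ne_zero_forall_smul_mem_topologicalClosure {E : Type*}
    [NormedAddCommGroup E] [NormedSpace ℝ E] [ProperSpace E] {H : AddSubgroup E}
    (hH : ¬DiscreteTopology H) : ∃ u ≠ (0 : E), ∀ t : ℝ, t • u ∈ H.topologicalClosure := by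
  choose g hgH hg₀ hg using fun j : ℕ ↦
    exists_ne_zero_norm_lt_of_not_discreteTopology hH (Nat.one_div_pos_of_nat (n := j))
  have hg_lim : Tendsto g atTop (𝓝 0) :=
    squeeze_zero_norm (fun j ↦ (hg j).le) tendsto_one_div_add_atTop_nhds_zero_nat
  have hsphere : ∀ j, ‖g j‖⁻¹ • g j ∈ Metric.sphere (0 : E) 1 := fun j ↦ by
    simpa using norm_smul_inv_norm (𝕜 := ℝ) (hg₀ j)
  obtain ⟨u, hu, φ, hφ, hlim⟩ := (isCompact_sphere (0 : E) 1).tendsto_subseq hsphere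
  refine ⟨u, ne_zero_of_mem_unit_sphere ⟨u, hu⟩, fun t ↦ ?_⟩
  exact H.smul_mem_topologicalClosure_of_tendsto (fun j ↦ hgH (φ j)) (fun j ↦ hg₀ (φ j))
    (hg_lim.comp hφ.tendsto_atTop) hlim t

theorem AddSubgroup.dense_of_ker_subset_topologicalClosure {E : Type*} [AddCommGroup E]
    [Module ℝ E] [TopologicalSpace E] [IsTopologicalAddGroup E] [ContinuousSMul ℝ E]
    (H : AddSubgroup E) {φ : E →ₗ[ℝ] ℝ} (hφ : φ ≠ 0)
    (hker : (LinearMap.ker φ : Set E) ⊆ H.topologicalClosure) (hdense : Dense (φ '' H)) :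
    Dense (H : Set E) := by
  obtain ⟨v, hv⟩ := (φ.surjective_or_eq_zero.resolve_right hφ) 1
  set G := H.topologicalClosure
  have hker' : ∀ w, w - φ w • v ∈ G := fun w ↦ hker (by simp [hv])
  -- `s ↦ s • v` is a continuous section of `φ`, so density of `φ '' H` lifts to the line `ℝ v`
  have hline : ∀ s : ℝ, s • v ∈ G := by
    have hclosed : IsClosed {s : ℝ | s • v ∈ G} :=
      H.isClosed_topologicalClosure.preimage (continuous_id.smul continuous_const)
    have hsub : φ '' H ⊆ {s : ℝ | s • v ∈ G} := by
      rintro _ ⟨h, hh, rfl⟩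
      simpa using G.sub_mem (H.le_topologicalClosure hh) (hker' h)
    exact fun s ↦ hclosed.closure_subset_iff.mpr hsub (hdense s)
  intro z
  have hz := G.add_mem (hker' z) (hline (φ z))
  rw [sub_add_cancel] at hz
  exact H.topologicalClosure_coe ▸ hz

theorem Prod.fst_mul_self_add_snd_mul_self_ne_zero {u : ℝ × ℝ} (hu : u ≠ 0) :
    u.1 * u.1 + u.2 * u.2 ≠ 0 :=
  fun h ↦ hu (Prod.ext_iff.mpr (mul_self_add_mul_self_eq_zero.mp h))

def wedge (u : ℝ × ℝ) : ℝ × ℝ →ₗ[ℝ] ℝ :=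
  u.1 • LinearMap.snd ℝ ℝ ℝ - u.2 • LinearMap.fst ℝ ℝ ℝ

@[simp]
theorem wedge_apply (u v : ℝ × ℝ) : wedge u v = u.1 * v.2 - u.2 * v.1 := rfl

theorem wedge_ne_zero {u : ℝ × ℝ} (hu : u ≠ 0) : wedge u ≠ 0 := fun h ↦
  Prod.fst_mul_self_add_snd_mul_self_ne_zero hu (by simpa using LinearMap.congr_fun h (-u.2, u.1))

theorem exists_smul_eq_of_wedge_eq_zero {u v : ℝ × ℝ} (hu : u ≠ 0) (hv : wedge u v = 0) :
    ∃ t : ℝ, t • u = v := by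
  have hn := Prod.fst_mul_self_add_snd_mul_self_ne_zero hu
  rw [wedge_apply] at hv
  refine ⟨(u.1 * v.1 + u.2 * v.2) / (u.1 * u.1 + u.2 * u.2), Prod.ext ?_ ?_⟩
  · rw [Prod.smul_fst, smul_eq_mul, div_mul_eq_mul_div, div_eq_iff hn]
    linear_combination u.2 * hv
  · rw [Prod.smul_snd, smul_eq_mul, div_mul_eq_mul_div, div_eq_iff hn]
    linear_combination -u.1 * hv

theorem eq_zero_of_wedge_mem_zmultiples {u : ℝ × ℝ} {c : ℝ}
    (h₁ : wedge u (1, 1) ∈ AddSubgroup.zmultiples c)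
    (h₂ : wedge u (√3, √2) ∈ AddSubgroup.zmultiples c)
    (h₃ : wedge u (√2, 1) ∈ AddSubgroup.zmultiples c) : u = 0 := by
  obtain ⟨k₁, hk₁⟩ := AddSubgroup.mem_zmultiples_iff.mp h₁
  obtain ⟨k₂, hk₂⟩ := AddSubgroup.mem_zmultiples_iff.mp h₂
  obtain ⟨k₃, hk₃⟩ := AddSubgroup.mem_zmultiples_iff.mp h₃
  simp only [wedge_apply, zsmul_eq_mul, mul_one] at hk₁ hk₂ hk₃
  have h2 : √2 * √2 = 2 := Real.mul_self_sqrt (by norm_num)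
  have hrel : c * (((k₁ - k₃ : ℤ) : ℝ) * √3 + ((k₃ + k₂ : ℤ) : ℝ) * √2
      + ((-(2 * k₁ + k₂) : ℤ) : ℝ)) = 0 := by
    push_cast
    linear_combination (√3 - √2 - (√2 - 1) * √2) * hk₁ + (√2 - 1) * hk₂ - (√3 - √2) * hk₃
      + k₁ * c * h2
  have hx : u.1 - u.2 = 0 ∧ u.1 - u.2 * √2 = 0 := by
    rcases mul_eq_zero.mp hrel with rfl | hrel
    · simp only [mul_zero] at hk₁ hk₃
      exact ⟨hk₁.symm, hk₃.symm⟩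
    · obtain ⟨h₁₃, h₃₂, h₁₂⟩ := eq_zero_of_mul_sqrt_three_add_mul_sqrt_two_add_eq_zero hrel
      obtain rfl : k₁ = 0 := by omega
      obtain rfl : k₃ = 0 := by omega
      simp only [Int.cast_zero, zero_mul] at hk₁ hk₃
      exact ⟨hk₁.symm, hk₃.symm⟩
  have hy : u.2 * (√2 - 1) = 0 := by linear_combination hx.1 - hx.2
  have hy₀ := (mul_eq_zero.mp hy).resolve_right (sub_ne_zero.mpr irrational_sqrt_two.ne_one)
  exact Prod.ext (by simpa [hy₀] using hx.1) hy₀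

noncomputable def generators : Fin 3 → ℝ × ℝ := ![(1, 1), (√3, √2), (√2, 1)]

theorem sum_zsmul_generators (k : Fin 3 → ℤ) :
    ∑ i, k i • generators i =
      ((k 0 : ℝ) + (k 1 : ℝ) * √3 + (k 2 : ℝ) * √2, (k 0 : ℝ) + (k 1 : ℝ) * √2 + (k 2 : ℝ)) := by
  ext <;> simp [generators, Fin.sum_univ_three, add_assoc]

theorem linearIndependent_int_generators : LinearIndependent ℤ generators := by
  rw [Fintype.linearIndependent_iff]
  intro k hk
  obtain ⟨hfst, hsnd⟩ := Prod.mk_eq_zero.mp ((sum_zsmul_generators k).symm.trans hk)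
  obtain ⟨h₁, h₀₂⟩ := irrational_sqrt_two.eq_zero_of_intCast_mul_add_eq_zero (m := k 1)
    (n := k 0 + k 2) (by push_cast; linarith)
  obtain ⟨h₂, h₀⟩ := irrational_sqrt_two.eq_zero_of_intCast_mul_add_eq_zero (m := k 2)
    (n := k 0) (by simp only [h₁, Int.cast_zero, zero_mul, add_zero] at hfst; linarith)
  intro i
  fin_cases i <;> assumption

theorem mem_span_generators_iff {v : ℝ × ℝ} :
    v ∈ Submodule.span ℤ (range generators) ↔
      ∃ n m p : ℤ,
        v = ((n : ℝ) + (m : ℝ) * √3 + (p : ℝ) * √2, (n : ℝ) + (m : ℝ) * √2 + (p : ℝ)) := by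
  rw [Submodule.mem_span_range_iff_exists_fun]
  constructor
  · rintro ⟨k, rfl⟩
    exact ⟨k 0, k 1, k 2, sum_zsmul_generators k⟩
  · rintro ⟨n, m, p, rfl⟩
    exact ⟨![n, m, p], sum_zsmul_generators _⟩

/-- The subgroup `H = ℤ·(1,1) + ℤ·(√3, √2) + ℤ·(√2, 1)` of `(ℝ², +)` is dense in `ℝ²`. -/
theorem dense_subgroup_R2 :
    Dense {v : ℝ × ℝ | ∃ n m p : ℤ,
      v = ((n : ℝ) + (m : ℝ) * Real.sqrt 3 + (p : ℝ) * Real.sqrt 2,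
           (n : ℝ) + (m : ℝ) * Real.sqrt 2 + (p : ℝ))} := by
  set H := (Submodule.span ℤ (range generators)).toAddSubgroup
  rw [show {v : ℝ × ℝ | _} = (H : Set (ℝ × ℝ)) from Set.ext fun v ↦ mem_span_generators_iff.symm]
  obtain ⟨u, hu, hline⟩ := AddSubgroup.exists_ne_zero_forall_smul_mem_topologicalClosure
    (H := H) (not_discreteTopology_span_of_linearIndependent linearIndependent_int_generators
      (by simp))
  refine H.dense_of_ker_subset_topologicalClosure (wedge_ne_zero hu) (fun v hv ↦ ?_) ?_
  · obtain ⟨t, rfl⟩ := exists_smul_eq_of_wedge_eq_zero hu hv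
    exact hline t
  · rcases (H.map (wedge u).toAddMonoidHom).dense_or_cyclic with hdense | ⟨c, hc⟩
    · simpa using hdense
    · have hmem (i : Fin 3) : wedge u (generators i) ∈ AddSubgroup.zmultiples c := by
        rw [AddSubgroup.zmultiples_eq_closure, ← hc]
        exact AddSubgroup.mem_map_of_mem _ (Submodule.subset_span (mem_range_self i))
      exact absurd (eq_zero_of_wedge_mem_zmultiples (hmem 0) (hmem 1) (hmem 2)) hu
end

section
/- Let G be the abelian subgroup of GL(5,ℂ) generated by the three matrices A, B, C that equal the 5×5 identity matrix except for one entry in the last row: A has entry 1 in position (5,1), B has entry 1 in position (5,2), and C has entry 1 in position (5,3). For z = (1+i, √3 + i√2, √2 + i, z_4, z_5) with z_4, z_5 ∈ ℂ, the orbit G(z) = {(1+i, √3+i√2, √2+i, z_4, n(1+i) + m(√3+i√2) + p(√2+i) + z_5) : n, m, p ∈ ℤ} is dense in the complex straight line {(1+i, √3+i√2, √2+i, z_4, w) : w ∈ ℂ}; that is, closure(G(z)) = {(1+i, √3+i√2, √2+i, z_4, w) : w ∈ ℂ}. -/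
/-!
The group `G` is the image of `ℤ³` under `c ↦ 1 + e₅ ⊗ (c₀, c₁, c₂, 0, 0)`, so the orbit of `z` is
`{z + γ e₅ : γ ∈ Γ}` with `Γ = ℤ(1+i) + ℤ(√3+i√2) + ℤ(√2+i) ⊆ ℂ`, and it suffices that `Γ` is dense.

`Γ` has `ℤ`-rank `3 > 2 = dim_ℝ ℂ`, so it is not discrete. Its closure is then a closed subgroup
of `ℂ` in which `0` is not isolated, and it contains a real line `ℝ d`: take small `g ∈ Γ` whose
directions converge to `d`, then `⌊t / ‖g‖⌋ • g → t • d`. If `φ` is a real functional with kernel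
`ℝ d`, the closure is all of `ℂ` as soon as `φ(Γ)` is dense in `ℝ`. Otherwise `φ(Γ)` is cyclic, so
`φ` maps the three generators into some `ℤ a`; since `√3 ∉ ℚ(√2)` and `√2 ∉ ℚ`, this forces `φ = 0`.
-/

open Matrix

/-- `A ∈ GL(5, ℂ)`: the identity except the entry in position `(5,1)` equals `1`. -/
noncomputable def Aex : Matrix.GeneralLinearGroup (Fin 5) ℂ :=
  Matrix.GeneralLinearGroup.mkOfDetNeZero
    !![1,0,0,0,0;0,1,0,0,0;0,0,1,0,0;0,0,0,1,0;1,0,0,0,1]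
    (by simp [Matrix.det_succ_row_zero, Fin.sum_univ_succ])

/-- `B ∈ GL(5, ℂ)`: the identity except the entry in position `(5,2)` equals `1`. -/
noncomputable def Bex : Matrix.GeneralLinearGroup (Fin 5) ℂ :=
  Matrix.GeneralLinearGroup.mkOfDetNeZero
    !![1,0,0,0,0;0,1,0,0,0;0,0,1,0,0;0,0,0,1,0;0,1,0,0,1]
    (by simp [Matrix.det_succ_row_zero, Fin.sum_univ_succ])

/-- `C ∈ GL(5, ℂ)`: the identity except the entry in position `(5,3)` equals `1`. -/
noncomputable def Cex : Matrix.GeneralLinearGroup (Fin 5) ℂ :=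
  Matrix.GeneralLinearGroup.mkOfDetNeZero
    !![1,0,0,0,0;0,1,0,0,0;0,0,1,0,0;0,0,0,1,0;0,0,1,0,1]
    (by simp [Matrix.det_succ_row_zero, Fin.sum_univ_succ])

/-- The subgroup of `GL(5, ℂ)` generated by `A`, `B` and `C`. -/
noncomputable def Gex : Subgroup (Matrix.GeneralLinearGroup (Fin 5) ℂ) :=
  Subgroup.closure {Aex, Bex, Cex}

open Filter Topology Metric Set Complex

theorem tendsto_floor_div_mul_nhdsGT (t : ℝ) :
    Tendsto (fun r : ℝ => (⌊t / r⌋ : ℝ) * r) (𝓝[>] 0) (𝓝 t) := by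
  have hlow : Tendsto (fun r : ℝ => t - r) (𝓝[>] 0) (𝓝 t) := by
    simpa using ((tendsto_const_nhds (x := t)).sub tendsto_id).mono_left
      (nhdsWithin_le_nhds (a := (0 : ℝ)))
  refine tendsto_of_tendsto_of_tendsto_of_le_of_le' hlow tendsto_const_nhds ?_ ?_
  · filter_upwards [self_mem_nhdsWithin] with r (hr : 0 < r)
    have := (div_lt_iff₀ hr).1 (Int.lt_floor_add_one (t / r))
    linarith
  · filter_upwards [self_mem_nhdsWithin] with r (hr : 0 < r)
    exact (le_div_iff₀ hr).1 (Int.floor_le (t / r))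

theorem AddSubgroup.exists_ne_zero_forall_smul_mem {E : Type*} [NormedAddCommGroup E]
    [NormedSpace ℝ E] [ProperSpace E] {K : AddSubgroup E} (hK : IsClosed (K : Set E))
    (h0 : AccPt (0 : E) (𝓟 K)) : ∃ d ≠ (0 : E), ∀ t : ℝ, t • d ∈ K := by
  set l := 𝓝[≠] (0 : E) ⊓ 𝓟 K
  have : l.NeBot := h0
  set dir : E → E := fun x => ‖x‖⁻¹ • x
  have hne : ∀ᶠ x in l, x ≠ 0 := mem_inf_of_left self_mem_nhdsWithin
  have hmem : ∀ᶠ x in l, x ∈ K := mem_inf_of_right (mem_principal_self _)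
  have hdir : Tendsto dir l (𝓟 (sphere 0 1)) := tendsto_principal.2 <| by
    filter_upwards [hne] with x hx
    simp [dir, norm_smul, hx]
  obtain ⟨d, hd, hcl⟩ := (isCompact_sphere (0 : E) 1).exists_clusterPt hdir
  refine ⟨d, ne_zero_of_mem_unit_sphere ⟨d, hd⟩, fun t => ?_⟩
  set F := l ⊓ Filter.comap dir (𝓝 d)
  have : F.NeBot := (map_neBot_iff dir).1 (by rw [Filter.push_pull, inf_comm]; exact hcl)
  have hnorm : Tendsto (‖·‖) F (𝓝[>] 0) :=
    tendsto_nhdsWithin_iff.2 ⟨tendsto_norm_zero.mono_left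
      (inf_le_left.trans (inf_le_left.trans nhdsWithin_le_nhds)),
      (inf_le_left : F ≤ l) (hne.mono fun x hx => norm_pos_iff.2 hx)⟩
  have hlim : Tendsto (fun x => ((⌊t / ‖x‖⌋ : ℝ) * ‖x‖) • dir x) F (𝓝 (t • d)) :=
    ((tendsto_floor_div_mul_nhdsGT t).comp hnorm).smul (tendsto_comap.mono_left inf_le_right)
  refine hK.mem_of_tendsto hlim ?_
  filter_upwards [(inf_le_left : F ≤ l) hne, (inf_le_left : F ≤ l) hmem] with x hx hxK
  rw [smul_smul, mul_assoc, mul_inv_cancel₀ (norm_ne_zero_iff.2 hx), mul_one,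
    Int.cast_smul_eq_zsmul]
  exact K.zsmul_mem hxK _

theorem AddSubgroup.accPt_zero_of_not_discreteTopology {E : Type*} [NormedAddCommGroup E]
    (S : AddSubgroup E) (h : ¬DiscreteTopology S) : AccPt (0 : E) (𝓟 S) := by
  contrapose! h
  obtain ⟨U, hU, hU0⟩ : ∃ U ∈ 𝓝 (0 : E), ∀ y ∈ U ∩ S, y = 0 := by
    simpa [accPt_iff_nhds] using h
  obtain ⟨ε, hε, hball⟩ := Metric.mem_nhds_iff.1 hU
  refine DiscreteTopology.of_forall_le_norm hε fun x hx => ?_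
  by_contra! hlt
  exact hx (Subtype.ext (hU0 x ⟨hball (mem_ball_zero_iff.2 hlt), x.2⟩))

theorem accPt_zero_span_int_of_finrank_lt {E : Type*} [NormedAddCommGroup E] [NormedSpace ℝ E]
    [FiniteDimensional ℝ E] {s : Set E} (h : Module.finrank ℝ E < s.finrank ℤ) :
    AccPt (0 : E) (𝓟 (Submodule.span ℤ s)) :=
  (Submodule.span ℤ s).toAddSubgroup.accPt_zero_of_not_discreteTopology fun hdisc =>
    h.not_ge <| Real.finrank_eq_int_finrank_of_discrete hdisc ▸ Submodule.finrank_le _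

theorem AddSubgroup.dense_of_ker_subset {E : Type*} [NormedAddCommGroup E] [NormedSpace ℝ E]
    {K : AddSubgroup E} (φ : E →ₗ[ℝ] ℝ) (hker : (LinearMap.ker φ : Set E) ⊆ K)
    (hφ : Dense (φ '' K)) : Dense (K : Set E) := by
  obtain ⟨_, ⟨k, hk, rfl⟩, hk0 : 0 < φ k⟩ := hφ.exists_mem_open isOpen_Ioi nonempty_Ioi
  set e := (φ k)⁻¹ • k
  have he : φ e = 1 := by simp [e, hk0.ne']
  rw [Metric.dense_iff]
  intro t ε hε
  obtain ⟨_, hγt, γ, hγ, rfl⟩ :=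
    Metric.dense_iff.1 hφ (φ t) (ε / (‖e‖ + 1)) (by positivity)
  have hdist : |φ t - φ γ| < ε / (‖e‖ + 1) := by
    simpa [Real.dist_eq, abs_sub_comm] using hγt
  refine ⟨t - (φ t - φ γ) • e, ?_, ?_⟩
  · rw [mem_ball, dist_eq_norm, sub_sub_cancel_left, norm_neg, norm_smul, Real.norm_eq_abs]
    calc |φ t - φ γ| * ‖e‖ ≤ |φ t - φ γ| * (‖e‖ + 1) := by gcongr; linarith
      _ < ε := (lt_div_iff₀ (by positivity)).1 hdist
  · have hmem : t - (φ t - φ γ) • e - γ ∈ K := hker (by simp [he])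
    simpa using K.add_mem hmem hγ

theorem Complex.eq_re_smul_of_im_mul_inv_eq_zero {z d : ℂ} (hd : d ≠ 0) (h : (z * d⁻¹).im = 0) :
    z = (z * d⁻¹).re • d := by
  have hreal : z * d⁻¹ = ((z * d⁻¹).re : ℂ) := Complex.ext (by simp) (by simp [h])
  rw [Complex.real_smul, ← hreal, inv_mul_cancel_right₀ hd]

theorem AddSubgroup.dense_of_accPt_zero_of_forall_linearMap {Γ : AddSubgroup ℂ}
    (h0 : AccPt (0 : ℂ) (𝓟 Γ))
    (hφ : ∀ (φ : ℂ →ₗ[ℝ] ℝ) (a : ℝ), (∀ γ ∈ Γ, φ γ ∈ AddSubgroup.zmultiples a) → φ = 0) :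
    Dense (Γ : Set ℂ) := by
  set K := Γ.topologicalClosure
  obtain ⟨d, hd, hline⟩ := K.exists_ne_zero_forall_smul_mem Γ.isClosed_topologicalClosure
    (h0.mono (principal_mono.2 Γ.le_topologicalClosure))
  set φ : ℂ →ₗ[ℝ] ℝ := Complex.imLm ∘ₗ LinearMap.mulRight ℝ d⁻¹
  have hker : (LinearMap.ker φ : Set ℂ) ⊆ K := fun z hz =>
    Complex.eq_re_smul_of_im_mul_inv_eq_zero hd hz ▸ hline _
  have hφ0 : φ ≠ 0 := fun h => by simpa [φ, hd] using LinearMap.congr_fun h (I * d)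
  rcases (Γ.map φ.toAddMonoidHom).dense_or_cyclic with hdense | ⟨a, ha⟩
  · rw [← dense_closure, ← Γ.topologicalClosure_coe]
    exact K.dense_of_ker_subset φ hker (hdense.mono (image_mono Γ.le_topologicalClosure))
  · refine absurd (hφ φ a fun γ hγ => ?_) hφ0
    rw [AddSubgroup.zmultiples_eq_closure, ← ha]
    exact AddSubgroup.mem_map_of_mem _ hγ

theorem Irrational.eq_zero_of_ratCast_add_mul_eq_zero {x : ℝ} (hx : Irrational x) {p q : ℚ}
    (h : (p : ℝ) + q * x = 0) : q = 0 := by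
  by_contra hq
  exact ((hx.ratCast_mul hq).ratCast_add p).ne_zero h

theorem sqrt_three_ne_ratCast_add_mul_sqrt_two (p q : ℚ) : √3 ≠ p + q * √2 := by
  intro h
  have h2 : √2 ^ 2 = 2 := Real.sq_sqrt (by norm_num)
  have h3 : √3 ^ 2 = 3 := Real.sq_sqrt (by norm_num)
  have hpq : ((p ^ 2 + 2 * q ^ 2 - 3 : ℚ) : ℝ) + ((2 * p * q : ℚ) : ℝ) * √2 = 0 := by
    push_cast
    rw [h] at h3
    linear_combination h3 - q ^ 2 * h2
  rcases mul_eq_zero.1 (irrational_sqrt_two.eq_zero_of_ratCast_add_mul_eq_zero hpq) with hp | rfl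
  · have h6 : √6 = ((2 * q : ℚ) : ℝ) := by
      rw [show (6 : ℝ) = 2 * 3 by norm_num, Real.sqrt_mul (by norm_num), h,
        show p = 0 by simpa using hp]
      push_cast
      linear_combination q * h2
    exact (irrational_sqrt_ofNat_iff.2 (by decide +kernel)).ne_rat _ h6
  · exact (Nat.prime_three.irrational_sqrt).ne_rat p (by simpa using h)

theorem eq_zero_of_combinations_eq_int_mul {α β a : ℝ} {k₁ k₂ k₃ : ℤ}
    (h₁ : α + β = k₁ * a) (h₂ : α * √3 + β * √2 = k₂ * a) (h₃ : α * √2 + β = k₃ * a) :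
    α = 0 ∧ β = 0 := by
  have hs2 : √2 ^ 2 = 2 := Real.sq_sqrt (by norm_num)
  have hs2' : √2 - 1 ≠ 0 := sub_ne_zero.2 irrational_sqrt_two.ne_one
  rcases eq_or_ne a 0 with rfl | ha
  · have hα : α * (√2 - 1) = 0 := by linear_combination h₃ - h₁
    have hα0 : α = 0 := (mul_eq_zero.1 hα).resolve_right hs2'
    exact ⟨hα0, by simpa [hα0] using h₁⟩
  have hα : α = (k₃ - k₁) * a * (√2 + 1) := by
    linear_combination (√2 + 1) * (h₃ - h₁) - α * hs2
  -- Eliminating `β` gives `(k₃ - k₁) (√3 - √2) = (k₂ - k₁ √2) (√2 - 1)`, which would put `√3`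
  -- in `ℚ(√2)` unless `k₃ = k₁`.
  have hk : k₃ = k₁ := by
    by_contra hne
    have hd : ((k₃ - k₁ : ℤ) : ℝ) ≠ 0 := by exact_mod_cast sub_ne_zero.2 hne
    apply sqrt_three_ne_ratCast_add_mul_sqrt_two ((-k₂ - 2 * k₁) / (k₃ - k₁))
      (1 + (k₂ + k₁) / (k₃ - k₁))
    have hkey : ((k₃ - k₁) * (√2 + 1) * (√3 - √2) - (k₂ - k₁ * √2)) * a = 0 := by
      linear_combination h₂ - √2 * h₁ - (√3 - √2) * hα
    push_cast at hd ⊢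
    field_simp
    linear_combination (√2 - 1) * (mul_eq_zero.1 hkey).resolve_right ha
      - ((k₃ - k₁) * (√3 - √2) + k₁) * hs2
  have hα0 : α = 0 := by simpa [hk] using hα
  have hβ : β = k₁ * a := by simpa [hα0] using h₁
  have hk₁ : k₁ = 0 := by
    have : ((k₂ : ℚ) : ℝ) + ((-k₁ : ℚ) : ℝ) * √2 = 0 := by
      have : (k₂ - k₁ * √2) * a = 0 := by rw [hα0, hβ] at h₂; linear_combination -h₂
      push_cast
      linear_combination (mul_eq_zero.1 this).resolve_right ha
    simpa using irrational_sqrt_two.eq_zero_of_ratCast_add_mul_eq_zero this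
  exact ⟨hα0, by simp [hβ, hk₁]⟩

theorem Complex.linearMap_apply_eq_re_mul_add_im_mul (φ : ℂ →ₗ[ℝ] ℝ) (z : ℂ) :
    φ z = z.re * φ 1 + z.im * φ I := by
  conv_lhs => rw [show z = z.re • (1 : ℂ) + z.im • I by apply Complex.ext <;> simp]
  rw [map_add, map_smul, map_smul, smul_eq_mul, smul_eq_mul]

theorem linearMap_eq_zero_of_generators_mem_zmultiples (φ : ℂ →ₗ[ℝ] ℝ) (a : ℝ)
    (h : ∀ x ∈ ({1 + I, √3 + I * √2, √2 + I} : Set ℂ), φ x ∈ AddSubgroup.zmultiples a) :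
    φ = 0 := by
  obtain ⟨k₁, hk₁⟩ := AddSubgroup.mem_zmultiples_iff.1 (h (1 + I) (by simp))
  obtain ⟨k₂, hk₂⟩ := AddSubgroup.mem_zmultiples_iff.1 (h (√3 + I * √2) (by simp))
  obtain ⟨k₃, hk₃⟩ := AddSubgroup.mem_zmultiples_iff.1 (h (√2 + I) (by simp))
  rw [Complex.linearMap_apply_eq_re_mul_add_im_mul φ] at hk₁ hk₂ hk₃
  simp only [zsmul_eq_mul, add_re, add_im, mul_re, mul_im, one_re, one_im, I_re, I_im, ofReal_re,
    ofReal_im, one_mul, zero_mul, mul_zero, add_zero, zero_add, sub_self] at hk₁ hk₂ hk₃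
  obtain ⟨h1, hI⟩ := eq_zero_of_combinations_eq_int_mul (α := φ 1) (β := φ I) (a := a)
    (k₁ := k₁) (k₂ := k₂) (k₃ := k₃) (by linarith) (by linarith) (by linarith)
  ext z
  simp [Complex.linearMap_apply_eq_re_mul_add_im_mul φ z, h1, hI]

theorem linearIndependent_int_generators_s18 :
    LinearIndependent ℤ ![1 + I, √3 + I * √2, √2 + I] := by
  refine Fintype.linearIndependent_iff.2 fun g hg => ?_
  simp only [Fin.sum_univ_three, Matrix.cons_val, zsmul_eq_mul, Complex.ext_iff, add_re, add_im,
    mul_re, mul_im, intCast_re, intCast_im, one_re, one_im, I_re, I_im, ofReal_re, ofReal_im,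
    zero_re, zero_im, mul_one, one_mul, mul_zero, zero_mul, add_zero, zero_add, sub_zero,
    sub_self] at hg
  obtain ⟨hre, him⟩ := hg
  have h1 : g 1 = 0 := by
    have : (((g 0 + g 2 : ℤ) : ℚ) : ℝ) + ((g 1 : ℚ) : ℝ) * √2 = 0 := by
      push_cast; linear_combination him
    exact_mod_cast irrational_sqrt_two.eq_zero_of_ratCast_add_mul_eq_zero this
  have h2 : g 2 = 0 := by
    have : (g 2 : ℝ) * (√2 - 1) = 0 := by
      rw [h1] at hre him; linear_combination hre - him
    exact_mod_cast (mul_eq_zero.1 this).resolve_right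
      (sub_ne_zero.2 irrational_sqrt_two.ne_one)
  have h0 : g 0 = 0 := by
    rw [h1, h2] at him; exact_mod_cast (by simpa using him : (g 0 : ℝ) = 0)
  intro i
  fin_cases i <;> assumption

theorem dense_addSubgroupClosure_generators :
    Dense (AddSubgroup.closure {1 + I, √3 + I * √2, √2 + I} : Set ℂ) := by
  refine AddSubgroup.dense_of_accPt_zero_of_forall_linearMap ?_ fun φ a h =>
    linearMap_eq_zero_of_generators_mem_zmultiples φ a fun x hx =>
      h x (AddSubgroup.subset_closure hx)
  have hrank : Module.finrank ℝ ℂ < (Set.range ![1 + I, √3 + I * √2, √2 + I]).finrank ℤ := by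
    rw [Set.finrank, finrank_span_eq_card linearIndependent_int_generators_s18,
      Complex.finrank_real_complex]
    simp
  have := accPt_zero_span_int_of_finrank_lt hrank
  rwa [← Submodule.coe_toAddSubgroup, Submodule.span_int_eq_addSubgroupClosure,
    Matrix.range_cons, Matrix.range_cons_cons_empty, Set.singleton_union] at this

section
variable {n R : Type*} [Fintype n] [DecidableEq n] [CommRing R]

theorem Matrix.one_add_vecMulVec_mul_one_add_vecMulVec {x y y' : n → R} (h : y ⬝ᵥ x = 0) :
    (1 + vecMulVec x y) * (1 + vecMulVec x y') = 1 + vecMulVec x (y + y') := by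
  rw [add_mul, mul_add, mul_add, vecMulVec_mul_vecMulVec, h, zero_smul, vecMulVec_zero,
    vecMulVec_add, mul_one, one_mul, mul_one, add_zero]
  abel

theorem Matrix.one_add_vecMulVec_mulVec (x y z : n → R) :
    (1 + vecMulVec x y) *ᵥ z = z + (y ⬝ᵥ z) • x := by
  rw [add_mulVec, one_mulVec, vecMulVec_mulVec, op_smul_eq_smul]

end

/-- `lastRowShear c` is the identity matrix with last row `(c₀, c₁, c₂, 0, 1)`. -/
noncomputable def lastRowShear : Multiplicative (Fin 3 → ℤ) →* GL (Fin 5) ℂ :=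
  MonoidHom.toHomUnits
    { toFun := fun c => (1 : Matrix (Fin 5) (Fin 5) ℂ) +
        vecMulVec (Pi.single 4 1) ![(c.toAdd 0 : ℂ), c.toAdd 1, c.toAdd 2, 0, 0]
      map_one' := by
        simp only [toAdd_one, Pi.zero_apply, Int.cast_zero, ← Matrix.zero_empty,
          Matrix.cons_zero_zero, vecMulVec_zero, add_zero]
      map_mul' := fun c c' => by
        rw [Matrix.one_add_vecMulVec_mul_one_add_vecMulVec (by simp)]
        congr
        ext i
        fin_cases i <;> simp }

theorem lastRowShear_mulVec (c : Multiplicative (Fin 3 → ℤ)) (a₀ a₁ a₂ z₄ z₅ : ℂ) :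
    (lastRowShear c : Matrix (Fin 5) (Fin 5) ℂ) *ᵥ ![a₀, a₁, a₂, z₄, z₅] =
      ![a₀, a₁, a₂, z₄, c.toAdd 0 * a₀ + c.toAdd 1 * a₁ + c.toAdd 2 * a₂ + z₅] := by
  simp only [lastRowShear, MonoidHom.coe_toHomUnits, MonoidHom.coe_mk, OneHom.coe_mk,
    Matrix.one_add_vecMulVec_mulVec]
  ext i
  fin_cases i <;> simp [dotProduct, Fin.sum_univ_five, add_comm]

theorem lastRowShear_ofAdd_single (i : Fin 3) :
    lastRowShear (.ofAdd (Pi.single i 1)) = ![Aex, Bex, Cex] i := by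
  fin_cases i <;> ext j k <;> fin_cases j <;> fin_cases k <;>
    simp [lastRowShear, Aex, Bex, Cex, Matrix.GeneralLinearGroup.mkOfDetNeZero,
      Matrix.GeneralLinearGroup.mk', Matrix.unitOfDetInvertible]

theorem Gex_eq_range_lastRowShear : Gex = lastRowShear.range := by
  apply le_antisymm
  · rw [Gex, Subgroup.closure_le]
    rintro _ (rfl | rfl | rfl)
    exacts [⟨_, lastRowShear_ofAdd_single 0⟩, ⟨_, lastRowShear_ofAdd_single 1⟩,
      ⟨_, lastRowShear_ofAdd_single 2⟩]
  · rintro _ ⟨c, rfl⟩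
    have hc : c = .ofAdd (Pi.single 0 1) ^ c.toAdd 0 * .ofAdd (Pi.single 1 1) ^ c.toAdd 1 *
        .ofAdd (Pi.single 2 1) ^ c.toAdd 2 := by
      apply Multiplicative.toAdd.injective
      ext i
      fin_cases i <;> simp
    have hgen (i : Fin 3) : lastRowShear (.ofAdd (Pi.single i 1)) ∈ Gex := by
      rw [lastRowShear_ofAdd_single]
      exact Subgroup.subset_closure (by fin_cases i <;> simp)
    rw [hc, map_mul, map_mul, map_zpow, map_zpow, map_zpow]
    exact mul_mem (mul_mem (zpow_mem (hgen 0) _) (zpow_mem (hgen 1) _)) (zpow_mem (hgen 2) _)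

theorem setOf_Gex_mulVec_eq (a₀ a₁ a₂ z₄ z₅ : ℂ) :
    {w : Fin 5 → ℂ | ∃ M ∈ Gex, (M : Matrix (Fin 5) (Fin 5) ℂ) *ᵥ ![a₀, a₁, a₂, z₄, z₅] = w} =
      {w | ∃ n m p : ℤ, w = ![a₀, a₁, a₂, z₄, n * a₀ + m * a₁ + p * a₂ + z₅]} := by
  ext w
  simp only [Gex_eq_range_lastRowShear, MonoidHom.mem_range, Set.mem_ofPred_eq]
  constructor
  · rintro ⟨_, ⟨c, rfl⟩, rfl⟩
    exact ⟨c.toAdd 0, c.toAdd 1, c.toAdd 2, lastRowShear_mulVec c _ _ _ _ _⟩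
  · rintro ⟨n, m, p, rfl⟩
    exact ⟨_, ⟨.ofAdd ![n, m, p], rfl⟩, lastRowShear_mulVec _ _ _ _ _ _⟩

theorem closure_setOf_eq_of_dense {a₀ a₁ a₂ : ℂ}
    (h : Dense (AddSubgroup.closure {a₀, a₁, a₂} : Set ℂ)) (z₄ z₅ : ℂ) :
    closure {w : Fin 5 → ℂ | ∃ n m p : ℤ, w = ![a₀, a₁, a₂, z₄, n * a₀ + m * a₁ + p * a₂ + z₅]} =
      {w | ∃ c : ℂ, w = ![a₀, a₁, a₂, z₄, c]} := by
  set f : ℂ → Fin 5 → ℂ := fun c => ![a₀, a₁, a₂, z₄, c + z₅]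
  have hf : IsClosedEmbedding f := by
    convert (isClosedEmbedding_update ![a₀, a₁, a₂, z₄, 0] 4).comp
      (Homeomorph.addRight z₅).isClosedEmbedding using 1
    ext c i
    fin_cases i <;> rfl
  have himage : {w : Fin 5 → ℂ | ∃ n m p : ℤ, w = ![a₀, a₁, a₂, z₄, n * a₀ + m * a₁ + p * a₂ + z₅]}
      = f '' AddSubgroup.closure {a₀, a₁, a₂} := by
    ext w
    simp only [← Submodule.span_int_eq_addSubgroupClosure, Submodule.coe_toAddSubgroup,
      Set.mem_image, SetLike.mem_coe, Submodule.mem_span_triple, Set.mem_ofPred_eq]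
    constructor
    · rintro ⟨n, m, p, rfl⟩
      exact ⟨_, ⟨n, m, p, rfl⟩, by simp [f, zsmul_eq_mul]⟩
    · rintro ⟨_, ⟨n, m, p, rfl⟩, rfl⟩
      exact ⟨n, m, p, by simp [f, zsmul_eq_mul]⟩
  rw [himage, hf.closure_image_eq, h.closure_eq, Set.image_univ]
  ext w
  exact ⟨fun ⟨c, hc⟩ => ⟨c + z₅, by simp [f, hc]⟩, fun ⟨c, hc⟩ => ⟨c - z₅, by simp [f, ← hc]⟩⟩

/-- For `z = (1+i, √3+i√2, √2+i, z₄, z₅)`, the orbit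
`G(z) = {(1+i, √3+i√2, √2+i, z₄, n(1+i) + m(√3+i√2) + p(√2+i) + z₅) : n, m, p ∈ ℤ}`
is dense in the complex straight line `{(1+i, √3+i√2, √2+i, z₄, w) : w ∈ ℂ}`. -/
theorem orbit_dense_in_complex_line (z₄ z₅ : ℂ) :
    {w : Fin 5 → ℂ | ∃ M ∈ Gex, (M : Matrix (Fin 5) (Fin 5) ℂ).mulVec
        ![1 + Complex.I, (Real.sqrt 3 : ℂ) + Complex.I * (Real.sqrt 2 : ℂ),
          (Real.sqrt 2 : ℂ) + Complex.I, z₄, z₅] = w} =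
      {w : Fin 5 → ℂ | ∃ n m p : ℤ,
        w = ![1 + Complex.I, (Real.sqrt 3 : ℂ) + Complex.I * (Real.sqrt 2 : ℂ),
          (Real.sqrt 2 : ℂ) + Complex.I, z₄,
          (n : ℂ) * (1 + Complex.I) +
            (m : ℂ) * ((Real.sqrt 3 : ℂ) + Complex.I * (Real.sqrt 2 : ℂ)) +
            (p : ℂ) * ((Real.sqrt 2 : ℂ) + Complex.I) + z₅]} ∧
    closure {w : Fin 5 → ℂ | ∃ M ∈ Gex, (M : Matrix (Fin 5) (Fin 5) ℂ).mulVec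
        ![1 + Complex.I, (Real.sqrt 3 : ℂ) + Complex.I * (Real.sqrt 2 : ℂ),
          (Real.sqrt 2 : ℂ) + Complex.I, z₄, z₅] = w} =
      {w : Fin 5 → ℂ | ∃ c : ℂ,
        w = ![1 + Complex.I, (Real.sqrt 3 : ℂ) + Complex.I * (Real.sqrt 2 : ℂ),
          (Real.sqrt 2 : ℂ) + Complex.I, z₄, c]} := by
  rw [setOf_Gex_mulVec_eq]
  exact ⟨rfl, closure_setOf_eq_of_dense dense_addSubgroupClosure_generators z₄ z₅⟩
end
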